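/- arXiv:2207.08628 — 9 statements merged into one kernel-verified Lean document; each statement's English description precedes it below -/
import Mathlib

section
/- Let P be a Pellian polynomial of odd degree d, and let a ∈ [0,1] satisfy a ≤ sin(π/(2d)). Then |P(a)| ≤ |T_d(a)|. -/
/-- A polynomial over `ℂ` is an even function. -/
def IsEvenPoly (P : Polynomial ℂ) : Prop := ∀ x : ℂ, P.eval (-x) = P.eval x

/-- A polynomial over `ℂ` is an odd function. -/
def IsOddPoly (P : Polynomial ℂ) : Prop := ∀ x : ℂ, P.eval (-x) = -P.eval x

/-- `P, Q ∈ ℂ[x]` form a Pell pair: fixed and opposite parity, and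
`|P(x)|² + (1 - x²)|Q(x)|² = 1` on `[-1,1]`. -/
def PellPair (P Q : Polynomial ℂ) : Prop :=
  ((IsEvenPoly P ∧ IsOddPoly Q) ∨ (IsOddPoly P ∧ IsEvenPoly Q)) ∧
    ∀ x : ℝ, x ∈ Set.Icc (-1 : ℝ) 1 →
      ‖P.eval (x : ℂ)‖ ^ 2 + (1 - x ^ 2) * ‖Q.eval (x : ℂ)‖ ^ 2 = 1

/-- A polynomial is Pellian if it is the first member of some Pell pair. -/
def Pellian (P : Polynomial ℂ) : Prop := ∃ Q : Polynomial ℂ, PellPair P Q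


/-!
If `(P, Q)` is a Pell pair with `deg P = n ≥ 1`, the top coefficients of
`P P̄ + (1 - x²) Q Q̄ = 1` force `deg Q = n - 1` and `|lc P| = |lc Q|`. With the unimodular
`ω = lc P / conj (lc Q)` the pair `P₁ = xP + (1 - x²) ω Q̄`, `Q₁ = xQ - ω P̄` is then a Pell pair
of smaller degree and opposite parity, and `P = xP₁ - ω (1 - x²) Q̄₁`, `Q = xQ₁ + ω P̄₁`.
At `x = sin φ` both `(|P|, cos φ |Q|)` and `(|P₁|, cos φ |Q₁|)` are unit vectors, and by the
triangle inequality the first is bounded coordinatewise by the second with its coordinates swapped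
and rotated by `φ`. Hence, by induction on the degree, the coordinate of the odd member of the pair
stays below `sin (n φ)` as long as `n φ ≤ π / 2`; and `|T_d (sin φ)| = sin (d φ)` for odd `d`.
-/

open Polynomial Real ComplexConjugate Set

lemma coeff_eq_zero_of_eval_neg {P : ℂ[X]} {s : ℂ} (hP : ∀ z, P.eval (-z) = s * P.eval z)
    {n : ℕ} (hn : (-1) ^ n ≠ s) : P.coeff n = 0 := by
  have hcomp : P.comp (C (-1) * X) = C s * P := Polynomial.funext fun z => by simp [hP]
  have hcoeff := congrArg (coeff · n) hcomp
  simp only [comp_C_mul_X_coeff, coeff_C_mul] at hcoeff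
  refine (mul_eq_zero.1 ?_).resolve_left (sub_ne_zero.2 hn)
  linear_combination hcoeff

lemma IsEvenPoly.coeff_eq_zero {P : ℂ[X]} (hP : IsEvenPoly P) {n : ℕ} (hn : Odd n) :
    P.coeff n = 0 :=
  coeff_eq_zero_of_eval_neg (s := 1) (fun z => by simp [hP z]) (by rw [hn.neg_one_pow]; norm_num)

lemma IsOddPoly.coeff_eq_zero {P : ℂ[X]} (hP : IsOddPoly P) {n : ℕ} (hn : Even n) :
    P.coeff n = 0 :=
  coeff_eq_zero_of_eval_neg (s := -1) (fun z => by simp [hP z]) (by rw [hn.neg_one_pow]; norm_num)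

lemma IsEvenPoly.even_natDegree {P : ℂ[X]} (hP : IsEvenPoly P) : Even P.natDegree := by
  by_contra h
  have hP0 : P ≠ 0 := by rintro rfl; simp at h
  exact hP0 (leadingCoeff_eq_zero.1 (hP.coeff_eq_zero (Nat.not_even_iff_odd.1 h)))

lemma IsOddPoly.odd_natDegree {P : ℂ[X]} (hP : IsOddPoly P) (hP0 : P ≠ 0) : Odd P.natDegree := by
  by_contra h
  exact hP0 (leadingCoeff_eq_zero.1 (hP.coeff_eq_zero (Nat.not_odd_iff_even.1 h)))

lemma eval_map_conj (P : ℂ[X]) (z : ℂ) : (P.map conj).eval z = conj (P.eval (conj z)) := by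
  simpa using eval_map_apply (p := P) (f := conj) (conj z)

lemma natDegree_mul_map_conj (P : ℂ[X]) : (P * P.map conj).natDegree = 2 * P.natDegree := by
  rcases eq_or_ne P 0 with rfl | hP
  · simp
  rw [natDegree_mul hP (map_ne_zero hP), natDegree_map]
  ring

lemma leadingCoeff_mul_map_conj (P : ℂ[X]) :
    (P * P.map conj).leadingCoeff = (‖P.leadingCoeff‖ ^ 2 : ℝ) := by
  rw [leadingCoeff_mul, leadingCoeff_map, Complex.mul_conj']
  push_cast
  rfl

-- For `|x| ≤ 1` and `c = √(1 - x²)`, the rotation `[[x, c], [-c, x]]` sends `(z, ω · conj (c w))`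
-- to the same pair built from the two vectors on the left-hand side.
lemma norm_sq_add_one_sub_sq_mul_norm_sq_descent (x : ℝ) (z w ω : ℂ) (hω : ‖ω‖ = 1) :
    ‖x * z + (1 - (x : ℂ) ^ 2) * (ω * conj w)‖ ^ 2 + (1 - x ^ 2) * ‖x * w - ω * conj z‖ ^ 2
      = ‖z‖ ^ 2 + (1 - x ^ 2) * ‖w‖ ^ 2 := by
  have hωω : ω * conj ω = 1 := by rw [Complex.mul_conj', hω]; simp
  apply Complex.ofReal_injective
  push_cast
  simp only [← Complex.mul_conj', map_add, map_sub, map_mul, map_one, map_pow, Complex.conj_ofReal,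
    Complex.conj_conj]
  linear_combination ((1 - (x : ℂ) ^ 2) ^ 2 * w * conj w + (1 - (x : ℂ) ^ 2) * z * conj z) * hωω

lemma sin_mul_add_cos_mul_le_sin_add {φ θ o e : ℝ} (ho : 0 ≤ o) (he : 0 ≤ e)
    (hoe : o ^ 2 + e ^ 2 = 1) (hoθ : o ≤ sin θ) (hφ : 0 ≤ φ) (hθ : 0 ≤ θ) (hφθ : φ + θ ≤ π / 2) :
    sin φ * e + cos φ * o ≤ sin (φ + θ) := by
  have ho1 : o ≤ 1 := by nlinarith
  have hsin : sin (arcsin o) = o := sin_arcsin (by linarith) ho1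
  have hcos : cos (arcsin o) = e := by
    rw [cos_arcsin, show 1 - o ^ 2 = e ^ 2 by linarith, sqrt_sq he]
  have hαθ : arcsin o ≤ θ :=
    (arcsin_le_iff_le_sin ⟨by linarith, ho1⟩ ⟨by linarith [pi_pos], by linarith⟩).2 hoθ
  calc sin φ * e + cos φ * o = sin (φ + arcsin o) := by rw [sin_add, hsin, hcos]
    _ ≤ sin (φ + θ) := sin_le_sin_of_le_of_le_pi_div_two
        (by linarith [arcsin_nonneg.2 ho, pi_pos]) hφθ (by linarith)

lemma abs_eval_T_sin_of_odd {n : ℕ} (hn : Odd n) (φ : ℝ) :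
    |(Chebyshev.T ℝ n).eval (sin φ)| = |sin (n * φ)| := by
  obtain ⟨m, rfl⟩ := hn
  have harg : (((2 * m + 1 : ℕ) : ℤ) : ℝ) * (π / 2 - φ) = π / 2 - (2 * m + 1 : ℕ) * φ + m * π := by
    push_cast
    ring
  rw [← cos_pi_div_two_sub, Chebyshev.T_real_cos, harg, cos_add_nat_mul_pi, abs_mul, abs_pow,
    abs_neg, abs_one, one_pow, one_mul, cos_pi_div_two_sub]

namespace PellPair

variable {P Q : ℂ[X]}

lemma mul_map_conj_add_eq_one (h : PellPair P Q) :
    P * P.map conj + (1 - X ^ 2) * (Q * Q.map conj) = 1 := by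
  refine eq_of_infinite_eval_eq _ _ (((Icc_infinite (by norm_num : (-1 : ℝ) < 1)).image
    Complex.ofReal_injective.injOn).mono ?_)
  rintro _ ⟨x, hx, rfl⟩
  have hx' := congrArg (fun t : ℝ => (t : ℂ)) (h.2 x hx)
  simp only [mem_ofPred_eq, eval_add, eval_mul, eval_sub, eval_one, eval_pow, eval_X,
    eval_map_conj, Complex.conj_ofReal, Complex.mul_conj']
  push_cast at hx' ⊢
  exact hx'

lemma natDegree_eq_add_one (h : PellPair P Q) (hQ : Q ≠ 0) :
    P.natDegree = Q.natDegree + 1 ∧ ‖P.leadingCoeff‖ = ‖Q.leadingCoeff‖ := by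
  set B := (1 - X ^ 2 : ℂ[X]) * (Q * Q.map conj)
  have hA : P * P.map conj = 1 - B := eq_sub_of_add_eq h.mul_map_conj_add_eq_one
  have hX : (1 - X ^ 2 : ℂ[X]) = -(X ^ 2 - C 1) := by simp
  have hXdeg : (1 - X ^ 2 : ℂ[X]).natDegree = 2 := by
    rw [hX, natDegree_neg, natDegree_X_pow_sub_C]
  have hXne : (1 - X ^ 2 : ℂ[X]) ≠ 0 := by
    intro h0
    simp [h0] at hXdeg
  have hXlc : (1 - X ^ 2 : ℂ[X]).leadingCoeff = -1 := by
    rw [hX, leadingCoeff_neg, (monic_X_pow_sub_C 1 two_ne_zero).leadingCoeff]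
  have hBdeg : B.natDegree = 2 * Q.natDegree + 2 := by
    rw [natDegree_mul hXne (mul_ne_zero hQ (map_ne_zero hQ)), hXdeg, natDegree_mul_map_conj]
    ring
  have hdeg : (1 : ℂ[X]).natDegree < B.natDegree := by rw [hBdeg]; simp
  have hdegA := natDegree_sub_eq_right_of_natDegree_lt hdeg
  have hlcA := leadingCoeff_sub_of_degree_lt' (degree_lt_degree hdeg)
  rw [← hA, natDegree_mul_map_conj, hBdeg] at hdegA
  rw [← hA, leadingCoeff_mul_map_conj, leadingCoeff_mul, hXlc, leadingCoeff_mul_map_conj] at hlcA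
  refine ⟨by omega, ?_⟩
  have hsq : (‖P.leadingCoeff‖ : ℂ) ^ 2 = ‖Q.leadingCoeff‖ ^ 2 := by simpa using hlcA
  exact (pow_left_inj₀ (norm_nonneg _) (norm_nonneg _) two_ne_zero).1 (by exact_mod_cast hsq)

lemma eq_zero_right_iff (h : PellPair P Q) : Q = 0 ↔ P.natDegree = 0 := by
  refine ⟨fun hQ => ?_, fun hP => by_contra fun hQ => ?_⟩
  · have hdeg := congrArg natDegree h.mul_map_conj_add_eq_one
    simp only [hQ, Polynomial.map_zero, mul_zero, add_zero, natDegree_mul_map_conj,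
      natDegree_one] at hdeg
    omega
  · have := (h.natDegree_eq_add_one hQ).1
    omega

noncomputable def descentFst (ω : ℂ) (P Q : ℂ[X]) : ℂ[X] := X * P + (1 - X ^ 2) * (C ω * Q.map conj)

noncomputable def descentSnd (ω : ℂ) (P Q : ℂ[X]) : ℂ[X] := X * Q - C ω * P.map conj

section Descent

variable (ω : ℂ)

lemma eval_descentFst (z : ℂ) :
    (descentFst ω P Q).eval z = z * P.eval z + (1 - z ^ 2) * (ω * conj (Q.eval (conj z))) := by
  simp [descentFst, eval_map_conj]

lemma eval_descentSnd (z : ℂ) :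
    (descentSnd ω P Q).eval z = z * Q.eval z - ω * conj (P.eval (conj z)) := by
  simp [descentSnd, eval_map_conj]

lemma descent_parity_of_odd (hP : IsOddPoly P) (hQ : IsEvenPoly Q) :
    IsEvenPoly (descentFst ω P Q) ∧ IsOddPoly (descentSnd ω P Q) := by
  refine ⟨fun z => ?_, fun z => ?_⟩ <;>
    simp only [eval_descentFst, eval_descentSnd, map_neg, neg_sq, hP z, hQ z, hP (conj z),
      hQ (conj z)] <;>
    ring

lemma descent_parity_of_even (hP : IsEvenPoly P) (hQ : IsOddPoly Q) :
    IsOddPoly (descentFst ω P Q) ∧ IsEvenPoly (descentSnd ω P Q) := by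
  refine ⟨fun z => ?_, fun z => ?_⟩ <;>
    simp only [eval_descentFst, eval_descentSnd, map_neg, neg_sq, hP z, hQ z, hP (conj z),
      hQ (conj z)] <;>
    ring

lemma pellPair_descent (h : PellPair P Q) (hω : ‖ω‖ = 1) :
    PellPair (descentFst ω P Q) (descentSnd ω P Q) := by
  refine ⟨?_, fun x hx => ?_⟩
  · rcases h.1 with ⟨hP, hQ⟩ | ⟨hP, hQ⟩
    · exact Or.inr (descent_parity_of_even ω hP hQ)
    · exact Or.inl (descent_parity_of_odd ω hP hQ)
  · rw [eval_descentFst, eval_descentSnd, Complex.conj_ofReal,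
      norm_sq_add_one_sub_sq_mul_norm_sq_descent x _ _ ω hω]
    exact h.2 x hx

lemma natDegree_descentFst_le {k : ℕ} (hP : P.natDegree = k + 1) (hQ : Q.natDegree = k)
    (hω : ω * conj Q.leadingCoeff = P.leadingCoeff) (hk : (descentFst ω P Q).coeff (k + 1) = 0) :
    (descentFst ω P Q).natDegree ≤ k := by
  have hle : (descentFst ω P Q).natDegree ≤ k + 2 := by
    unfold descentFst
    compute_degree
    rw [hP, hQ]
    omega
  have htop : (descentFst ω P Q).coeff (k + 2) = 0 := by
    have hR : (C ω * Q.map conj).coeff (k + 2) = 0 := coeff_eq_zero_of_natDegree_lt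
      ((natDegree_C_mul_le _ _).trans_lt (by rw [natDegree_map, hQ]; omega))
    rw [descentFst, sub_mul, one_mul, coeff_add, coeff_sub, hR, coeff_X_mul, coeff_X_pow_mul,
      coeff_C_mul, coeff_map, ← hP, coeff_natDegree, ← hQ, coeff_natDegree, hω]
    ring
  simpa using natDegree_le_pred (natDegree_le_pred hle htop) hk

lemma norm_eval_le_descent (hω : ‖ω‖ = 1) (x : ℝ) :
    ‖P.eval (x : ℂ)‖ ≤ |x| * ‖(descentFst ω P Q).eval (x : ℂ)‖
        + |1 - x ^ 2| * ‖(descentSnd ω P Q).eval (x : ℂ)‖ ∧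
      ‖Q.eval (x : ℂ)‖ ≤ |x| * ‖(descentSnd ω P Q).eval (x : ℂ)‖
        + ‖(descentFst ω P Q).eval (x : ℂ)‖ := by
  have hωω : ω * conj ω = 1 := by rw [Complex.mul_conj', hω]; simp
  have hP : P.eval (x : ℂ) = x * (descentFst ω P Q).eval (x : ℂ)
      - ω * ((1 - x ^ 2 : ℝ) : ℂ) * conj ((descentSnd ω P Q).eval (x : ℂ)) := by
    simp only [eval_descentFst, eval_descentSnd, map_sub, map_mul, Complex.conj_conj,
      Complex.conj_ofReal]
    push_cast
    linear_combination (-(1 - (x : ℂ) ^ 2) * P.eval (x : ℂ)) * hωω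
  have hQ : Q.eval (x : ℂ) = x * (descentSnd ω P Q).eval (x : ℂ)
      + ω * conj ((descentFst ω P Q).eval (x : ℂ)) := by
    simp only [eval_descentFst, eval_descentSnd, map_add, map_sub, map_mul, map_one, map_pow,
      Complex.conj_conj, Complex.conj_ofReal]
    linear_combination (-(1 - (x : ℂ) ^ 2) * Q.eval (x : ℂ)) * hωω
  constructor
  · rw [hP]
    refine (norm_sub_le _ _).trans_eq ?_
    simp only [norm_mul, Complex.norm_real, Real.norm_eq_abs, Complex.norm_conj, hω, one_mul]
  · rw [hQ]
    refine (norm_add_le _ _).trans_eq ?_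
    simp only [norm_mul, Complex.norm_real, Real.norm_eq_abs, Complex.norm_conj, hω, one_mul]

end Descent

theorem exists_descent (h : PellPair P Q) {k : ℕ} (hP : P.natDegree = k + 1) :
    ∃ P₁ Q₁ : ℂ[X], PellPair P₁ Q₁ ∧ P₁.natDegree ≤ k ∧
      (IsOddPoly P → IsEvenPoly Q → IsEvenPoly P₁ ∧ IsOddPoly Q₁) ∧
      (IsEvenPoly P → IsOddPoly Q → IsOddPoly P₁ ∧ IsEvenPoly Q₁) ∧
      ∀ x : ℝ, ‖P.eval (x : ℂ)‖ ≤ |x| * ‖P₁.eval (x : ℂ)‖ + |1 - x ^ 2| * ‖Q₁.eval (x : ℂ)‖ ∧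
        ‖Q.eval (x : ℂ)‖ ≤ |x| * ‖Q₁.eval (x : ℂ)‖ + ‖P₁.eval (x : ℂ)‖ := by
  have hQ0 : Q ≠ 0 := mt h.eq_zero_right_iff.1 (by omega)
  obtain ⟨hdeg, hlc⟩ := h.natDegree_eq_add_one hQ0
  have hlcQ : conj Q.leadingCoeff ≠ 0 := by simpa using hQ0
  set ω := P.leadingCoeff / conj Q.leadingCoeff
  have hω : ‖ω‖ = 1 := by
    rw [norm_div, Complex.norm_conj, hlc, div_self (by simpa using hQ0)]
  have hparity : (descentFst ω P Q).coeff (k + 1) = 0 := by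
    rcases h.1 with ⟨hPe, hQo⟩ | ⟨hPo, hQe⟩
    · exact (descent_parity_of_even ω hPe hQo).1.coeff_eq_zero (hP ▸ hPe.even_natDegree)
    · refine (descent_parity_of_odd ω hPo hQe).1.coeff_eq_zero (hP ▸ hPo.odd_natDegree ?_)
      rintro rfl
      simp at hP
  exact ⟨_, _, pellPair_descent ω h hω,
    natDegree_descentFst_le ω hP (by omega) (div_mul_cancel₀ _ hlcQ) hparity,
    descent_parity_of_odd ω, descent_parity_of_even ω, norm_eval_le_descent ω hω⟩

lemma norm_sq_add_sq_eval_sin (h : PellPair P Q) (φ : ℝ) :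
    ‖P.eval (sin φ : ℂ)‖ ^ 2 + (cos φ * ‖Q.eval (sin φ : ℂ)‖) ^ 2 = 1 := by
  rw [mul_pow, cos_sq']
  exact h.2 _ ⟨neg_one_le_sin φ, sin_le_one φ⟩

lemma norm_eval_sin_le_sin_add {P₁ Q₁ : ℂ[X]} {φ θ : ℝ} (hφ : 0 ≤ φ) (hθ : 0 ≤ θ)
    (hφθ : φ + θ ≤ π / 2) (h₁ : PellPair P₁ Q₁)
    (hP : ‖P.eval (sin φ : ℂ)‖ ≤ |sin φ| * ‖P₁.eval (sin φ : ℂ)‖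
      + |1 - sin φ ^ 2| * ‖Q₁.eval (sin φ : ℂ)‖)
    (hQ : ‖Q.eval (sin φ : ℂ)‖ ≤ |sin φ| * ‖Q₁.eval (sin φ : ℂ)‖ + ‖P₁.eval (sin φ : ℂ)‖) :
    (cos φ * ‖Q₁.eval (sin φ : ℂ)‖ ≤ sin θ → ‖P.eval (sin φ : ℂ)‖ ≤ sin (φ + θ)) ∧
      (‖P₁.eval (sin φ : ℂ)‖ ≤ sin θ → cos φ * ‖Q.eval (sin φ : ℂ)‖ ≤ sin (φ + θ)) := by
  have hφ2 : φ ≤ π / 2 := by linarith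
  have hsin : |sin φ| = sin φ := abs_of_nonneg (sin_nonneg_of_nonneg_of_le_pi hφ (by linarith))
  have hcos : 0 ≤ cos φ := cos_nonneg_of_neg_pi_div_two_le_of_le (by linarith) hφ2
  have hcos_sq : |1 - sin φ ^ 2| = cos φ * cos φ := by
    rw [← cos_sq', abs_of_nonneg (sq_nonneg _), sq]
  have hpell := h₁.norm_sq_add_sq_eval_sin φ
  rw [hsin, hcos_sq] at hP
  rw [hsin] at hQ
  refine ⟨fun hQ₁ => ?_, fun hP₁ => ?_⟩
  · calc ‖P.eval (sin φ : ℂ)‖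
        ≤ sin φ * ‖P₁.eval (sin φ : ℂ)‖ + cos φ * (cos φ * ‖Q₁.eval (sin φ : ℂ)‖) :=
          hP.trans_eq (by ring)
      _ ≤ sin (φ + θ) := sin_mul_add_cos_mul_le_sin_add (by positivity) (norm_nonneg _)
          (by linarith) hQ₁ hφ hθ hφθ
  · calc cos φ * ‖Q.eval (sin φ : ℂ)‖
        ≤ cos φ * (sin φ * ‖Q₁.eval (sin φ : ℂ)‖ + ‖P₁.eval (sin φ : ℂ)‖) :=
          mul_le_mul_of_nonneg_left hQ hcos
      _ = sin φ * (cos φ * ‖Q₁.eval (sin φ : ℂ)‖) + cos φ * ‖P₁.eval (sin φ : ℂ)‖ := by ring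
      _ ≤ sin (φ + θ) := sin_mul_add_cos_mul_le_sin_add (norm_nonneg _) (by positivity)
          (by linarith) hP₁ hφ hθ hφθ

theorem norm_eval_sin_le (n : ℕ) {φ : ℝ} (hφ : 0 ≤ φ) (hnφ : n * φ ≤ π / 2)
    (h : PellPair P Q) (hP : P.natDegree ≤ n) :
    (IsOddPoly P → IsEvenPoly Q → ‖P.eval (sin φ : ℂ)‖ ≤ sin (n * φ)) ∧
      (IsEvenPoly P → IsOddPoly Q → cos φ * ‖Q.eval (sin φ : ℂ)‖ ≤ sin (n * φ)) := by
  induction n generalizing P Q with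
  | zero =>
    rw [CharP.cast_eq_zero, zero_mul, sin_zero]
    refine ⟨fun hPo _ => ?_, fun _ _ => ?_⟩
    · rw [eq_C_of_natDegree_le_zero hP, hPo.coeff_eq_zero Even.zero]
      simp
    · simp [h.eq_zero_right_iff.2 (by omega)]
  | succ k ih =>
    rw [Nat.cast_succ] at hnφ ⊢
    have hkφ : k * φ ≤ π / 2 := by nlinarith
    rcases hP.lt_or_eq with hlt | heq
    · have hmono : sin (k * φ) ≤ sin ((k + 1) * φ) :=
        sin_le_sin_of_le_of_le_pi_div_two (by nlinarith [pi_pos]) hnφ (by nlinarith)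
      obtain ⟨hodd, heven⟩ := ih hkφ h (Nat.lt_succ_iff.1 hlt)
      exact ⟨fun hPo hQe => (hodd hPo hQe).trans hmono,
        fun hPe hQo => (heven hPe hQo).trans hmono⟩
    obtain ⟨P₁, Q₁, h₁, hdeg₁, hodd, heven, hle⟩ := h.exists_descent heq
    obtain ⟨ih_odd, ih_even⟩ := ih hkφ h₁ hdeg₁
    obtain ⟨hP_le, hQ_le⟩ := norm_eval_sin_le_sin_add (θ := k * φ) hφ (by positivity)
      (by linarith) h₁ (hle (sin φ)).1 (hle (sin φ)).2
    rw [add_one_mul, add_comm _ φ]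
    exact ⟨fun hPo hQe => hP_le (ih_even (hodd hPo hQe).1 (hodd hPo hQe).2),
      fun hPe hQo => hQ_le (ih_odd (heven hPe hQo).1 (heven hPe hQo).2)⟩

end PellPair

theorem pellian_le_chebyshev_of_odd (P : Polynomial ℂ) (hP : Pellian P)
    (d : ℕ) (hdeg : P.natDegree = d) (hodd : Odd d)
    (a : ℝ) (ha : a ∈ Set.Icc (0 : ℝ) 1) (ha' : a ≤ Real.sin (Real.pi / (2 * d))) :
    ‖P.eval (a : ℂ)‖ ≤ |(Polynomial.Chebyshev.T ℝ d).eval a| := by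
  obtain ⟨Q, h⟩ := hP
  have hparity : IsOddPoly P ∧ IsEvenPoly Q := h.1.resolve_left fun ⟨hPe, _⟩ =>
    Nat.not_even_iff_odd.2 hodd (hdeg ▸ hPe.even_natDegree)
  have hd : (1 : ℝ) ≤ d := by exact_mod_cast hodd.pos
  have hsin : sin (arcsin a) = a := sin_arcsin (by linarith [ha.1]) ha.2
  have hπd : 0 ≤ π / (2 * d) := by positivity
  have hφ : arcsin a ≤ π / (2 * d) :=
    (arcsin_le_iff_le_sin ⟨by linarith [ha.1], ha.2⟩
      ⟨by linarith [pi_pos], div_le_div_of_nonneg_left pi_pos.le two_pos (by linarith)⟩).2 ha'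
  have hdφ : d * arcsin a ≤ π / 2 := by
    calc d * arcsin a ≤ d * (π / (2 * d)) := by gcongr
      _ = π / 2 := by field_simp
  have hφ0 : 0 ≤ arcsin a := arcsin_nonneg.2 ha.1
  calc ‖P.eval (a : ℂ)‖ = ‖P.eval (sin (arcsin a) : ℂ)‖ := by rw [hsin]
    _ ≤ sin (d * arcsin a) := (h.norm_eval_sin_le d hφ0 hdφ hdeg.le).1 hparity.1 hparity.2
    _ = |(Chebyshev.T ℝ d).eval a| := by
      rw [← abs_of_nonneg (sin_nonneg_of_nonneg_of_le_pi (by positivity) (by linarith [pi_pos])),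
        ← abs_eval_T_sin_of_odd hodd, hsin]
end

section
/- Let P be a Pellian polynomial of degree d ≥ 1 (of either parity), and let a ∈ [0,1] satisfy cos(π/(2d)) ≤ a. Then |P(a)| ≥ |T_d(a)|. -/
/-!
Let `Q` be the Pell partner of `P`. The Pell identity forces `deg Q < d`, and at the
roots `x_k = cos θ_k` of `T_d` it gives `|Q(x_k)| ≤ 1 / sin θ_k = (-1)^k U_{d-1}(x_k)`.
To the right of all these roots the Lagrange basis polynomials on them alternate in sign
like `(-1)^k`, so interpolation yields `|Q(a)| ≤ U_{d-1}(a)`. The Chebyshev Pell identity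
`T_d² + (1 - x²) U_{d-1}² = 1` turns this into `|T_d(a)| ≤ |P(a)|`.
-/

open Polynomial Finset Real

namespace Lagrange

variable {F : Type*} [Field F] {ι : Type*} [DecidableEq ι]

theorem eval_basis (s : Finset ι) (v : ι → F) (i : ι) (x : F) :
    (Lagrange.basis s v i).eval x = ∏ j ∈ s.erase i, (x - v j) / (v i - v j) := by
  simp only [Lagrange.basis, basisDivisor, eval_prod, eval_mul, eval_C, eval_sub, eval_X,
    div_eq_inv_mul]

theorem eval_eq_sum_mul_eval_basis {s : Finset ι} {v : ι → F} (hvs : Set.InjOn v s)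
    {f : F[X]} (hf : f.degree < #s) (x : F) :
    f.eval x = ∑ i ∈ s, f.eval (v i) * (Lagrange.basis s v i).eval x := by
  conv_lhs => rw [eq_interpolate hvs hf]
  simp only [interpolate_apply, eval_finsetSum, eval_mul, eval_C]

-- Each node larger than `v i` contributes exactly one negative factor.
theorem abs_eval_basis_of_strictAnti {n : ℕ} {v : Fin n → ℝ} (hv : StrictAnti v) {a : ℝ}
    (ha : ∀ j, v j ≤ a) (i : Fin n) :
    |(Lagrange.basis univ v i).eval a| = (-1) ^ (i : ℕ) * (Lagrange.basis univ v i).eval a := by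
  have hsign : ∀ j ∈ univ.erase i, |(a - v j) / (v i - v j)|
      = (if j < i then -1 else 1) * ((a - v j) / (v i - v j)) := by
    intro j hj
    have hnum : 0 ≤ a - v j := sub_nonneg.mpr (ha j)
    rcases lt_or_gt_of_ne (mem_erase.mp hj).1 with hji | hij
    · rw [if_pos hji, abs_of_nonpos (div_nonpos_of_nonneg_of_nonpos hnum
        (sub_nonpos.mpr (hv hji).le)), neg_one_mul]
    · rw [if_neg (not_lt.mpr hij.le), abs_of_nonneg (div_nonneg hnum
        (sub_nonneg.mpr (hv hij).le)), one_mul]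
  have hcount : (univ.erase i).filter (· < i) = Iio i := by
    ext j
    simp only [mem_filter, mem_erase, mem_univ, mem_Iio, and_true]
    exact ⟨And.right, fun h => ⟨h.ne, h⟩⟩
  rw [eval_basis, abs_prod, prod_congr rfl hsign, prod_mul_distrib, prod_ite, prod_const,
    prod_const, one_pow, mul_one, hcount, Fin.card_Iio]

end Lagrange

theorem norm_eval_le_eval_of_alternating {n : ℕ} {v : Fin n → ℝ} (hv : StrictAnti v)
    {f : ℂ[X]} {g : ℝ[X]} (hf : f.degree < n) (hg : g.degree < n)
    (hfg : ∀ i, ‖f.eval (v i : ℂ)‖ ≤ (-1) ^ (i : ℕ) * g.eval (v i))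
    {a : ℝ} (ha : ∀ i, v i ≤ a) : ‖f.eval (a : ℂ)‖ ≤ g.eval a := by
  have hcard : #(univ : Finset (Fin n)) = n := card_fin n
  have hvC : Set.InjOn (fun i => (v i : ℂ)) (univ : Finset (Fin n)) :=
    fun i _ j _ hij => hv.injective (Complex.ofReal_injective hij)
  have hbasis : ∀ i, (Lagrange.basis univ (fun i => (v i : ℂ)) i).eval (a : ℂ)
      = (((Lagrange.basis univ v i).eval a : ℝ) : ℂ) := by
    intro i
    simp only [Lagrange.eval_basis]
    push_cast
    rfl
  rw [Lagrange.eval_eq_sum_mul_eval_basis hvC (by rwa [hcard]),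
    Lagrange.eval_eq_sum_mul_eval_basis hv.injective.injOn (by rwa [hcard])]
  calc ‖∑ i : Fin n, f.eval (v i : ℂ) * (Lagrange.basis univ (fun i => (v i : ℂ)) i).eval (a : ℂ)‖
      ≤ ∑ i : Fin n, ‖f.eval (v i : ℂ)‖ * |(Lagrange.basis univ v i).eval a| := by
        refine (norm_sum_le _ _).trans (le_of_eq (sum_congr rfl fun i _ => ?_))
        rw [hbasis, norm_mul, Complex.norm_real, Real.norm_eq_abs]
    _ ≤ ∑ i : Fin n, (-1) ^ (i : ℕ) * g.eval (v i) * |(Lagrange.basis univ v i).eval a| :=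
        sum_le_sum fun i _ => mul_le_mul_of_nonneg_right (hfg i) (abs_nonneg _)
    _ = ∑ i : Fin n, g.eval (v i) * (Lagrange.basis univ v i).eval a := by
        refine sum_congr rfl fun i _ => ?_
        rw [Lagrange.abs_eval_basis_of_strictAnti hv ha, mul_mul_mul_comm, ← mul_pow,
          neg_one_mul, neg_neg, one_pow, one_mul]

section Pell

local notation "conj" => starRingEnd ℂ

theorem pell_identity_of_forall_mem_Icc {P Q : ℂ[X]}
    (h : ∀ x : ℝ, x ∈ Set.Icc (-1 : ℝ) 1 →
      ‖P.eval (x : ℂ)‖ ^ 2 + (1 - x ^ 2) * ‖Q.eval (x : ℂ)‖ ^ 2 = 1) :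
    P * P.map conj + (1 - X ^ 2) * (Q * Q.map conj) = 1 := by
  have hconj : ∀ (R : ℂ[X]) (x : ℝ), (R.map conj).eval (x : ℂ) = conj (R.eval (x : ℂ)) := by
    intro R x
    rw [eval_map, ← Complex.conj_ofReal x, eval₂_at_apply, Complex.conj_ofReal]
  refine eq_of_infinite_eval_eq _ _ ((Set.Icc_infinite (by norm_num : (-1 : ℝ) < 1)).image
    Complex.ofReal_injective.injOn |>.mono ?_)
  rintro _ ⟨x, hx, rfl⟩
  simp only [Set.mem_ofPred_eq, eval_add, eval_mul, eval_sub, eval_one, eval_pow, eval_X, hconj,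
    Complex.mul_conj, Complex.normSq_eq_norm_sq]
  exact_mod_cast h x hx

theorem degree_lt_natDegree_of_pell_identity {P Q : ℂ[X]}
    (h : P * P.map conj + (1 - X ^ 2) * (Q * Q.map conj) = 1) : Q.degree < P.natDegree := by
  rcases eq_or_ne Q 0 with rfl | hQ
  · rw [degree_zero]
    exact WithBot.bot_lt_coe _
  have hQ' : Q.map conj ≠ 0 := (Polynomial.map_ne_zero_iff (RingHom.injective _)).mpr hQ
  have hX : (1 - X ^ 2 : ℂ[X]).natDegree = 2 := by compute_degree!
  have hdeg : ((1 - X ^ 2) * (Q * Q.map conj)).natDegree = 2 + 2 * Q.natDegree := by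
    rw [natDegree_mul (by rintro h; simp [h] at hX) (mul_ne_zero hQ hQ'), hX,
      natDegree_mul hQ hQ', natDegree_map]
    ring
  have hPP : (P * P.map conj).natDegree = 2 + 2 * Q.natDegree := by
    rw [eq_sub_of_add_eq h, natDegree_sub_eq_right_of_natDegree_lt (by rw [hdeg]; simp), hdeg]
  have hle : (P * P.map conj).natDegree ≤ 2 * P.natDegree := by
    simpa [two_mul] using natDegree_mul_le (p := P) (q := P.map conj)
  exact degree_le_natDegree.trans_lt (by exact_mod_cast (by omega : Q.natDegree < P.natDegree))

end Pell

-- `cos (chebyshevRootAngle d k)` for `k < d` are the roots of `T d`, see `Chebyshev.roots_T_real`.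
noncomputable def chebyshevRootAngle (d k : ℕ) : ℝ := (2 * k + 1) * π / (2 * d)

theorem chebyshevRootAngle_mem_Ioo {d k : ℕ} (hk : k < d) :
    chebyshevRootAngle d k ∈ Set.Ioo 0 π := by
  have hd : (0 : ℝ) < d := by exact_mod_cast hk.pos
  have hk' : (k : ℝ) + 1 ≤ d := by exact_mod_cast hk
  refine ⟨by unfold chebyshevRootAngle; positivity, ?_⟩
  rw [chebyshevRootAngle, div_lt_iff₀ (by positivity)]
  nlinarith [pi_pos]

theorem strictAnti_cos_chebyshevRootAngle (d : ℕ) :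
    StrictAnti fun k : Fin d => cos (chebyshevRootAngle d k) := by
  intro k l hkl
  have hd : (0 : ℝ) < d := by exact_mod_cast l.pos
  refine strictAntiOn_cos (Set.Ioo_subset_Icc_self (chebyshevRootAngle_mem_Ioo k.2))
    (Set.Ioo_subset_Icc_self (chebyshevRootAngle_mem_Ioo l.2)) ?_
  unfold chebyshevRootAngle
  gcongr
  exact_mod_cast hkl

theorem sin_mul_chebyshevRootAngle {d : ℕ} (hd : d ≠ 0) (k : ℕ) :
    sin (d * chebyshevRootAngle d k) = (-1) ^ k := by
  have : (d : ℝ) * chebyshevRootAngle d k = π / 2 + k * π := by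
    unfold chebyshevRootAngle
    field_simp
    ring
  rw [this, sin_add_nat_mul_pi, sin_pi_div_two, mul_one]

-- `U n (cos θ) * sin θ = sin ((n + 1) θ) = (-1) ^ k`, while the Pell identity gives
-- `‖Q (cos θ)‖ * sin θ ≤ 1`.
theorem norm_eval_cos_chebyshevRootAngle_le {P Q : ℂ[X]}
    (h : ∀ x : ℝ, x ∈ Set.Icc (-1 : ℝ) 1 →
      ‖P.eval (x : ℂ)‖ ^ 2 + (1 - x ^ 2) * ‖Q.eval (x : ℂ)‖ ^ 2 = 1) {n k : ℕ} (hk : k ≤ n) :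
    ‖Q.eval (cos (chebyshevRootAngle (n + 1) k) : ℂ)‖
      ≤ (-1) ^ k * (Chebyshev.U ℝ n).eval (cos (chebyshevRootAngle (n + 1) k)) := by
  set θ := chebyshevRootAngle (n + 1) k
  have hsin : 0 < sin θ := sin_pos_of_mem_Ioo (chebyshevRootAngle_mem_Ioo (Nat.lt_succ_of_le hk))
  have hU : (-1) ^ k * (Chebyshev.U ℝ n).eval (cos θ) * sin θ = 1 := by
    have hsin_mul := sin_mul_chebyshevRootAngle (d := n + 1) n.succ_ne_zero k
    rw [mul_assoc, Chebyshev.U_real_cos]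
    push_cast at hsin_mul ⊢
    rw [hsin_mul, ← mul_pow]
    norm_num
  have hpell := h (cos θ) ⟨neg_one_le_cos θ, cos_le_one θ⟩
  rw [← sin_sq] at hpell
  have hQsin : ‖Q.eval (cos θ : ℂ)‖ * sin θ ≤ 1 :=
    (sq_le_one_iff₀ (by positivity)).mp (by nlinarith [sq_nonneg ‖P.eval (cos θ : ℂ)‖])
  exact le_of_mul_le_mul_right (hQsin.trans hU.symm.le) hsin

theorem eval_T_sq_add_one_sub_sq_mul_eval_U_sq (n : ℤ) {x : ℝ} (hx : x ∈ Set.Icc (-1 : ℝ) 1) :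
    (Chebyshev.T ℝ (n + 1)).eval x ^ 2 + (1 - x ^ 2) * (Chebyshev.U ℝ n).eval x ^ 2 = 1 := by
  obtain ⟨θ, -, rfl⟩ := bijOn_cos.surjOn hx
  have hU := Chebyshev.U_real_cos θ n
  rw [Chebyshev.T_real_cos, ← sin_sq]
  push_cast at hU ⊢
  linear_combination ((Chebyshev.U ℝ n).eval (cos θ) * sin θ + sin ((n + 1) * θ)) * hU +
    cos_sq_add_sin_sq ((n + 1) * θ)

theorem pellian_ge_chebyshev_near_one (P : Polynomial ℂ) (hP : Pellian P)
    (d : ℕ) (hdeg : P.natDegree = d) (hd1 : 1 ≤ d)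
    (a : ℝ) (ha : a ∈ Set.Icc (0 : ℝ) 1) (ha' : Real.cos (Real.pi / (2 * d)) ≤ a) :
    |(Polynomial.Chebyshev.T ℝ d).eval a| ≤ ‖P.eval (a : ℂ)‖ := by
  obtain ⟨Q, -, hPQ⟩ := hP
  obtain ⟨n, rfl⟩ : ∃ n, d = n + 1 := ⟨d - 1, by omega⟩
  have hnodes : ∀ k : Fin (n + 1), cos (chebyshevRootAngle (n + 1) k) ≤ a := fun k =>
    ((strictAnti_cos_chebyshevRootAngle (n + 1)).antitone (Fin.zero_le k)).trans
      (by simpa [chebyshevRootAngle] using ha')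
  have hQdeg : Q.degree < (n + 1 : ℕ) :=
    hdeg ▸ degree_lt_natDegree_of_pell_identity (pell_identity_of_forall_mem_Icc hPQ)
  have hUdeg : (Chebyshev.U ℝ n).degree < (n + 1 : ℕ) := by
    rw [Chebyshev.degree_U_natCast]
    exact_mod_cast n.lt_succ_self
  have hQ : ‖Q.eval (a : ℂ)‖ ≤ (Chebyshev.U ℝ n).eval a :=
    norm_eval_le_eval_of_alternating (strictAnti_cos_chebyshevRootAngle (n + 1)) hQdeg hUdeg
      (fun k => norm_eval_cos_chebyshevRootAngle_le hPQ (Nat.le_of_lt_succ k.2)) hnodes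
  have ha₁ : a ∈ Set.Icc (-1 : ℝ) 1 := ⟨by linarith [ha.1], ha.2⟩
  have hQsq : (1 - a ^ 2) * ‖Q.eval (a : ℂ)‖ ^ 2 ≤ (1 - a ^ 2) * (Chebyshev.U ℝ n).eval a ^ 2 :=
    mul_le_mul_of_nonneg_left (pow_le_pow_left₀ (norm_nonneg _) hQ 2)
      (sub_nonneg.mpr (pow_le_one₀ ha.1 ha.2))
  rw [← abs_norm, ← sq_le_sq]
  push_cast
  linarith [hPQ a ha₁, eval_T_sq_add_one_sub_sq_mul_eval_U_sq n ha₁]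
end

section
/- For any κ, η ∈ (0,1), with κ̄ := √(1 − κ²), there exists an odd Pellian polynomial J with real coefficients whose degree is the smallest odd integer l satisfying l ≥ κ⁻¹·ln(2/√η), such that |J(x)|² ≤ η for all x with |x| ≤ κ̄. -/
/-!
The polynomial is the rescaled Chebyshev polynomial `J(x) = T_l(x/a) / T_l(1/a)` with
`a = √(1 - κ²)`. On `[-a, a]` we have `|T_l(x/a)| ≤ 1`, while
`T_l(1/a) = cosh (l · artanh κ) ≥ e^{lκ}/2 ≥ 1/√η` by the choice of `l`.

`J` is Pellian because it is odd with `|J| ≤ 1` on `[-1, 1]` and `|J| ≥ 1` outside. Writing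
`J(x) = x K(x²)`, the polynomial `1 - t K(t)²` vanishes at `t = 1`, and its quotient `r` by
`1 - t` is nonnegative on all of `ℝ` (clear for `t < 0`; for `t ≥ 0`, `1 - J(√t)²` has the sign
of `1 - t`). A nonnegative real polynomial is a sum of two squares `A² + B²`, and `Q(x) = A(x²) + i B(x²)` is
the even partner of `J`.
-/

open Polynomial Real

theorem forall_nonneg_of_forall_ne_nonneg {f : ℝ → ℝ} (hf : Continuous f) {a : ℝ}
    (h : ∀ x, x ≠ a → 0 ≤ f x) (x : ℝ) : 0 ≤ f x :=
  (isClosed_le continuous_const hf).closure_subset_iff.mpr h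
    ((dense_compl_singleton a).closure_eq ▸ Set.mem_univ x)

namespace Polynomial

theorem exists_eq_X_mul_expand_two_of_comp_neg_X {R : Type*} [CommRing R] [IsAddTorsionFree R]
    {p : R[X]} (hp : p.comp (-X) = -p) : ∃ q : R[X], p = X * expand R 2 q := by
  have hcoeff : ∀ n, Even n → p.coeff n = 0 := fun n hn => by
    have h : (p.comp (-X)).coeff n = (-p).coeff n := by rw [hp]
    rw [show (-X : R[X]) = C (-1) * X by simp, comp_C_mul_X_coeff, hn.neg_one_pow, mul_one,
      coeff_neg] at h
    exact self_eq_neg.mp h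
  refine ⟨contract 2 p.divX, ?_⟩
  ext (_ | n)
  · simp [hcoeff 0 ⟨0, rfl⟩]
  · rw [coeff_X_mul, coeff_expand two_pos, coeff_contract two_ne_zero, coeff_divX]
    split_ifs with h
    · rw [Nat.div_mul_cancel h]
    · exact hcoeff _ (Nat.even_add_one.mpr fun he => h (even_iff_two_dvd.mp he))

theorem exists_sq_add_sq_dvd_of_nonneg {p : ℝ[X]} (hp : ∀ x, 0 ≤ p.eval x)
    (hdeg : 0 < p.degree) :
    ∃ a b : ℝ, (X - C a) ^ 2 + C b ^ 2 ∣ p := by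
  obtain ⟨z, hz⟩ := IsAlgClosed.exists_aeval_eq_zero ℂ p hdeg.ne'
  by_cases him : z.im = 0
  · refine ⟨z.re, 0, ?_⟩
    have hp0 : p ≠ 0 := ne_zero_of_degree_gt hdeg
    have hroot : p.IsRoot z.re := by
      rw [show z = algebraMap ℝ ℂ z.re from Complex.ext rfl him,
        aeval_algebraMap_apply_eq_algebraMap_eval] at hz
      exact (FaithfulSMul.algebraMap_eq_zero_iff ℝ ℂ).mp hz
    have hmin : IsLocalMin p.eval z.re :=
      Filter.Eventually.of_forall fun x => by
        show p.eval z.re ≤ p.eval x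
        rw [hroot.eq_zero]; exact hp x
    have hderiv : p.derivative.IsRoot z.re := hmin.hasDerivAt_eq_zero (p.hasDerivAt z.re)
    simpa using (le_rootMultiplicity_iff hp0).mp
      ((one_lt_rootMultiplicity_iff_isRoot hp0).mpr ⟨hroot, hderiv⟩)
  · refine ⟨z.re, z.im, ?_⟩
    convert p.quadratic_dvd_of_aeval_eq_zero_im_ne_zero hz him using 1
    rw [← Complex.normSq_eq_norm_sq, Complex.normSq_apply]
    simp only [map_add, map_mul, map_ofNat]
    ring

theorem exists_eq_sq_add_sq_of_nonneg {p : ℝ[X]} (hp : ∀ x, 0 ≤ p.eval x) :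
    ∃ A B : ℝ[X], p = A ^ 2 + B ^ 2 := by
  induction h : p.natDegree using Nat.strong_induction_on generalizing p with
  | _ n ih =>
  rcases Nat.eq_zero_or_pos n with rfl | hn
  · rw [eq_C_of_natDegree_eq_zero h]
    refine ⟨C √(p.coeff 0), 0, ?_⟩
    rw [← map_pow, sq_sqrt (by simpa [coeff_zero_eq_eval_zero] using hp 0)]
    ring
  obtain ⟨a, b, q, rfl⟩ := exists_sq_add_sq_dvd_of_nonneg hp
    (natDegree_pos_iff_degree_pos.mp (h ▸ hn))
  have hD : ∀ x, x ≠ a → 0 < ((X - C a) ^ 2 + C b ^ 2).eval x := fun x hx => by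
    simp only [eval_add, eval_pow, eval_sub, eval_X, eval_C]
    have : x - a ≠ 0 := sub_ne_zero.mpr hx
    positivity
  have hq : ∀ x, 0 ≤ q.eval x := forall_nonneg_of_forall_ne_nonneg q.continuous
    fun x hx => (mul_nonneg_iff_of_pos_left (hD x hx)).mp (by simpa using hp x)
  have hq0 : q ≠ 0 := by rintro rfl; rw [mul_zero, natDegree_zero] at h; omega
  have hdegD : ((X - C a) ^ 2 + C b ^ 2 : ℝ[X]).natDegree = 2 := by compute_degree!
  have hdeg : q.natDegree < n := by
    rw [← h, natDegree_mul (by rintro h0; simp [h0] at hdegD) hq0, hdegD]; omega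
  obtain ⟨A, B, rfl⟩ := ih _ hdeg hq rfl
  exact ⟨_, _, sq_add_sq_mul_sq_add_sq⟩

theorem eval_map_ofReal (p : ℝ[X]) (x : ℝ) :
    (p.map (algebraMap ℝ ℂ)).eval (x : ℂ) = p.eval x := by
  rw [eval_map]; exact eval₂_at_apply (algebraMap ℝ ℂ) x

theorem comp_neg_X_eq_neg_of_odd {J : ℝ[X]} (hodd : ∀ x, J.eval (-x) = -J.eval x) :
    J.comp (-X) = -J :=
  Polynomial.funext fun x => by simp [hodd]

end Polynomial

theorem pellPair_map_expand {J A B : ℝ[X]} (hodd : ∀ x, J.eval (-x) = -J.eval x)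
    (hpell : ∀ x ∈ Set.Icc (-1 : ℝ) 1,
      J.eval x ^ 2 + (1 - x ^ 2) * (A.eval (x ^ 2) ^ 2 + B.eval (x ^ 2) ^ 2) = 1) :
    PellPair (J.map (algebraMap ℝ ℂ))
      ((expand ℝ 2 A).map (algebraMap ℝ ℂ) +
        C Complex.I * (expand ℝ 2 B).map (algebraMap ℝ ℂ)) := by
  refine ⟨Or.inr ⟨fun z => ?_, fun z => by simp [map_expand, expand_eval]⟩, fun x hx => ?_⟩
  · simpa [aeval_comp] using congrArg (aeval z) (comp_neg_X_eq_neg_of_odd hodd)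
  have hQ : ((expand ℝ 2 A).map (algebraMap ℝ ℂ) + C Complex.I * (expand ℝ 2 B).map
      (algebraMap ℝ ℂ)).eval (x : ℂ) = A.eval (x ^ 2) + B.eval (x ^ 2) * Complex.I := by
    simp only [eval_add, eval_mul, eval_C, map_expand, expand_eval, ← Complex.ofReal_pow,
      eval_map_ofReal]
    ring
  rw [hQ, eval_map_ofReal, Complex.norm_real, Real.norm_eq_abs, sq_abs, Complex.sq_norm,
    Complex.normSq_add_mul_I]
  exact hpell x hx

theorem pellian_map_of_odd {J : ℝ[X]} (hodd : ∀ x, J.eval (-x) = -J.eval x)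
    (hle : ∀ x, |x| ≤ 1 → |J.eval x| ≤ 1) (hge : ∀ x, 1 ≤ |x| → 1 ≤ |J.eval x|) :
    Pellian (J.map (algebraMap ℝ ℂ)) := by
  obtain ⟨K, hK⟩ := exists_eq_X_mul_expand_two_of_comp_neg_X (comp_neg_X_eq_neg_of_odd hodd)
  have hJK : ∀ x, J.eval x ^ 2 = x ^ 2 * K.eval (x ^ 2) ^ 2 := fun x => by
    simp [hK, expand_eval, mul_pow]
  have hroot : (1 - X * K ^ 2).IsRoot 1 := by
    have h1 : J.eval 1 ^ 2 = 1 := by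
      rw [← sq_abs, le_antisymm (hle 1 (by simp)) (hge 1 (by simp)), one_pow]
    have hK1 : K.eval 1 ^ 2 = 1 := by simpa [hJK] using h1
    simp [hK1]
  obtain ⟨M, hM⟩ := dvd_iff_isRoot.mpr hroot
  have hr : ∀ t, 1 - t * K.eval t ^ 2 = (1 - t) * (-M).eval t := fun t => by
    have := congrArg (eval t) hM
    simp only [eval_sub, eval_one, eval_mul, eval_X, eval_pow, eval_C] at this
    rw [this, eval_neg]; ring
  have hr_nonneg : ∀ t, 0 ≤ (-M).eval t := by
    refine forall_nonneg_of_forall_ne_nonneg (a := 1) (-M).continuous fun t ht => ?_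
    rcases lt_or_ge t 0 with ht0 | ht0
    · nlinarith [hr t, sq_nonneg (K.eval t)]
    have hsq : J.eval √t ^ 2 = t * K.eval t ^ 2 := by rw [hJK, sq_sqrt ht0]
    rcases ht.lt_or_gt with ht1 | ht1
    · have := hle √t (by rw [abs_of_nonneg (sqrt_nonneg t)]; exact sqrt_le_one.mpr ht1.le)
      nlinarith [hr t, sq_le_one_iff_abs_le_one (J.eval √t) |>.mpr this]
    · have := hge √t (by rw [abs_of_nonneg (sqrt_nonneg t)]; exact one_le_sqrt.mpr ht1.le)
      nlinarith [hr t, one_le_sq_iff_one_le_abs (J.eval √t) |>.mpr this]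
  obtain ⟨A, B, hAB⟩ := exists_eq_sq_add_sq_of_nonneg hr_nonneg
  refine ⟨_, pellPair_map_expand (A := A) (B := B) hodd fun x _ => ?_⟩
  have := hr (x ^ 2)
  rw [hAB] at this
  simp only [eval_add, eval_pow] at this
  rw [hJK]
  linarith

theorem Real.self_le_artanh {x : ℝ} (hx : x ∈ Set.Ico 0 1) : x ≤ artanh x := by
  have hsum := hasSum_log_sub_log_of_abs_lt_one (abs_lt.mpr ⟨by linarith [hx.1], hx.2⟩)
  have h0 := le_hasSum hsum 0 fun j _ => by have := hx.1; positivity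
  rw [artanh_eq_half_log ⟨by linarith [hx.1], hx.2.le⟩, log_div (by linarith [hx.1])
    (by linarith [hx.2])]
  simp only [CharP.cast_eq_zero, mul_zero, zero_add, div_one, mul_one, pow_one] at h0
  linarith

namespace Polynomial.Chebyshev

theorem abs_eval_T_real_abs (n : ℤ) (x : ℝ) : |(T ℝ n).eval (|x|)| = |(T ℝ n).eval x| := by
  rcases abs_choice x with h | h <;> simp [h, T_eval_neg, abs_mul]

theorem monotoneOn_eval_T_real (n : ℤ) : MonotoneOn (fun x => (T ℝ n).eval x) (Set.Ici 1) := by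
  intro y hy z hz hyz
  have hy₀ : 0 < y := zero_lt_one.trans_le hy
  have hz₀ : 0 < z := zero_lt_one.trans_le hz
  dsimp only
  rw [← cosh_arcosh hy, ← cosh_arcosh hz, T_real_cosh, T_real_cosh, cosh_le_cosh, abs_mul,
    abs_mul, abs_of_nonneg (arcosh_nonneg hy), abs_of_nonneg (arcosh_nonneg hz)]
  gcongr
  exact (arcosh_le_arcosh hy₀ hz₀).mpr hyz

theorem abs_eval_T_real_le_eval_T_real (n : ℤ) {x y : ℝ} (hy : 1 ≤ y) (hxy : |x| ≤ y) :
    |(T ℝ n).eval x| ≤ (T ℝ n).eval y := by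
  rcases le_or_gt |x| 1 with hx | hx
  · exact (abs_eval_T_real_le_one n hx).trans (one_le_eval_T_real n hy)
  rw [← abs_eval_T_real_abs, abs_of_nonneg (zero_le_one.trans (one_le_eval_T_real n hx.le))]
  exact monotoneOn_eval_T_real n (Set.mem_Ici.mpr hx.le) hy hxy

theorem eval_T_real_le_abs_eval_T_real (n : ℤ) {x y : ℝ} (hx : 1 ≤ x) (hxy : x ≤ |y|) :
    (T ℝ n).eval x ≤ |(T ℝ n).eval y| := by
  have hy : 1 ≤ |y| := hx.trans hxy
  rw [← abs_eval_T_real_abs, abs_of_nonneg (zero_le_one.trans (one_le_eval_T_real n hy))]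
  exact monotoneOn_eval_T_real n hx hy hxy

theorem exp_mul_div_two_le_eval_T_real (n : ℕ) {κ : ℝ} (hκ : κ ∈ Set.Ico 0 1) :
    exp (n * κ) / 2 ≤ (T ℝ n).eval (√(1 - κ ^ 2))⁻¹ := by
  rw [← one_div, ← cosh_artanh ⟨by linarith [hκ.1], hκ.2⟩, T_real_cosh, cosh_eq]
  have hexp : exp (n * κ) ≤ exp (n * artanh κ) :=
    exp_le_exp.mpr (mul_le_mul_of_nonneg_left (self_le_artanh hκ) n.cast_nonneg)
  have := exp_pos (-(n * artanh κ))
  push_cast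
  linarith

theorem one_le_eval_T_real_inv (n : ℤ) {a : ℝ} (ha₀ : 0 < a) (ha₁ : a ≤ 1) :
    1 ≤ (T ℝ n).eval a⁻¹ :=
  one_le_eval_T_real n ((one_le_inv₀ ha₀).mpr ha₁)

end Polynomial.Chebyshev

open Polynomial.Chebyshev

noncomputable def scaledT (n : ℤ) (a : ℝ) : ℝ[X] :=
  C ((T ℝ n).eval a⁻¹)⁻¹ * (T ℝ n).comp (C a⁻¹ * X)

section scaledT

variable {n : ℤ} {a : ℝ}

theorem eval_scaledT (x : ℝ) :
    (scaledT n a).eval x = (T ℝ n).eval (a⁻¹ * x) / (T ℝ n).eval a⁻¹ := by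
  simp [scaledT, eval_comp, div_eq_inv_mul]

theorem scaledT_eval_neg (hn : Odd n) (x : ℝ) :
    (scaledT n a).eval (-x) = -(scaledT n a).eval x := by
  simp [eval_scaledT, T_eval_neg, Int.negOnePow_odd n hn, neg_div]

theorem natDegree_scaledT (ha₀ : 0 < a) (ha₁ : a ≤ 1) :
    (scaledT n a).natDegree = n.natAbs := by
  have hc : (T ℝ n).eval a⁻¹ ≠ 0 :=
    (zero_lt_one.trans_le (one_le_eval_T_real_inv n ha₀ ha₁)).ne'
  rw [scaledT, natDegree_C_mul (inv_ne_zero hc), natDegree_comp, natDegree_T,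
    natDegree_C_mul_X _ (inv_ne_zero ha₀.ne'), mul_one]

theorem abs_eval_scaledT_le_one (ha₀ : 0 < a) (ha₁ : a ≤ 1) {x : ℝ} (hx : |x| ≤ 1) :
    |(scaledT n a).eval x| ≤ 1 := by
  have hc := one_le_eval_T_real_inv n ha₀ ha₁
  rw [eval_scaledT, abs_div, abs_of_pos (a := (T ℝ n).eval a⁻¹) (by linarith),
    div_le_one (by linarith)]
  refine abs_eval_T_real_le_eval_T_real n ((one_le_inv₀ ha₀).mpr ha₁) ?_
  rw [abs_mul, abs_of_pos (inv_pos.mpr ha₀)]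
  exact mul_le_of_le_one_right (inv_pos.mpr ha₀).le hx

theorem one_le_abs_eval_scaledT (ha₀ : 0 < a) (ha₁ : a ≤ 1) {x : ℝ} (hx : 1 ≤ |x|) :
    1 ≤ |(scaledT n a).eval x| := by
  have hc := one_le_eval_T_real_inv n ha₀ ha₁
  rw [eval_scaledT, abs_div, abs_of_pos (a := (T ℝ n).eval a⁻¹) (by linarith),
    one_le_div (by linarith)]
  refine eval_T_real_le_abs_eval_T_real n ((one_le_inv₀ ha₀).mpr ha₁) ?_
  rw [abs_mul, abs_of_pos (inv_pos.mpr ha₀)]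
  exact le_mul_of_one_le_right (inv_pos.mpr ha₀).le hx

theorem abs_eval_scaledT_le_inv (ha₀ : 0 < a) (ha₁ : a ≤ 1) {x : ℝ} (hx : |x| ≤ a) :
    |(scaledT n a).eval x| ≤ ((T ℝ n).eval a⁻¹)⁻¹ := by
  have hc := one_le_eval_T_real_inv n ha₀ ha₁
  rw [eval_scaledT, abs_div, abs_of_pos (a := (T ℝ n).eval a⁻¹) (by linarith), div_eq_mul_inv]
  refine mul_le_of_le_one_left (by positivity) (abs_eval_T_real_le_one n ?_)
  rw [abs_mul, abs_of_pos (inv_pos.mpr ha₀)]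
  exact inv_mul_le_one_of_le₀ hx ha₀.le

theorem pellian_map_scaledT (hn : Odd n) (ha₀ : 0 < a) (ha₁ : a ≤ 1) :
    Pellian ((scaledT n a).map (algebraMap ℝ ℂ)) :=
  pellian_map_of_odd (scaledT_eval_neg hn) (fun _ => abs_eval_scaledT_le_one ha₀ ha₁)
    (fun _ => one_le_abs_eval_scaledT ha₀ ha₁)

end scaledT

theorem exists_fixed_point_damping_poly (κ η : ℝ) (hκ : κ ∈ Set.Ioo (0 : ℝ) 1)
    (hη : η ∈ Set.Ioo (0 : ℝ) 1)
    (l : ℕ) (hl : IsLeast {n : ℕ | Odd n ∧ κ⁻¹ * Real.log (2 / Real.sqrt η) ≤ (n : ℝ)} l) :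
    ∃ J : Polynomial ℝ,
      (∀ x : ℝ, J.eval (-x) = -J.eval x) ∧
      Pellian (J.map (algebraMap ℝ ℂ)) ∧
      J.natDegree = l ∧
      ∀ x : ℝ, |x| ≤ Real.sqrt (1 - κ ^ 2) → |J.eval x| ^ 2 ≤ η := by
  obtain ⟨hκ₀, hκ₁⟩ := hκ
  obtain ⟨⟨hl_odd, hl_ge⟩, -⟩ := hl
  set a := √(1 - κ ^ 2)
  have ha₀ : 0 < a := sqrt_pos.mpr (by nlinarith)
  have ha₁ : a ≤ 1 := sqrt_le_one.mpr (by nlinarith)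
  have hodd : Odd (l : ℤ) := hl_odd.natCast
  have hsqrt : 0 < √η := sqrt_pos.mpr hη.1
  have hT : (√η)⁻¹ ≤ (T ℝ l).eval a⁻¹ := calc
    (√η)⁻¹ = exp (log (2 / √η)) / 2 := by rw [exp_log (by positivity)]; field_simp
    _ ≤ exp (l * κ) / 2 := by gcongr; rw [mul_comm]; exact (inv_mul_le_iff₀ hκ₀).mp hl_ge
    _ ≤ (T ℝ l).eval a⁻¹ := exp_mul_div_two_le_eval_T_real l ⟨hκ₀.le, hκ₁⟩
  refine ⟨scaledT l a, scaledT_eval_neg hodd, pellian_map_scaledT hodd ha₀ ha₁,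
    by simpa using natDegree_scaledT (n := l) ha₀ ha₁, fun x hx => ?_⟩
  have hJ := abs_eval_scaledT_le_inv (n := l) ha₀ ha₁ hx
  calc |(scaledT l a).eval x| ^ 2 ≤ ((T ℝ l).eval a⁻¹)⁻¹ ^ 2 :=
        pow_le_pow_left₀ (abs_nonneg _) hJ 2
    _ ≤ √η ^ 2 := pow_le_pow_left₀ ((abs_nonneg _).trans hJ) (inv_le_of_inv_le₀ hsqrt hT) 2
    _ = η := sq_sqrt hη.1.le
end

section
/- For every real t ≥ 1, arcosh(t) ≥ 2·√((t − 1)/(t + 1)). -/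
/-!
With `s = √((t - 1) / (t + 1)) ∈ [0, 1)` one has `t + √(t² - 1) = (1 + s) / (1 - s)`, so
`arcosh t = 2 artanh s`, and `artanh s = s + s³/3 + s⁵/5 + ⋯ ≥ s`.
-/

/-- The inverse hyperbolic cosine, `arcosh t = log (t + √(t² - 1))` for `t ≥ 1`. -/
noncomputable def arcosh (t : ℝ) : ℝ := Real.log (t + Real.sqrt (t ^ 2 - 1))

theorem Real.self_le_artanh_s8 {x : ℝ} (hx₀ : 0 ≤ x) (hx₁ : x < 1) : x ≤ artanh x := by
  have hsum := hasSum_log_sub_log_of_abs_lt_one (abs_lt.2 ⟨by linarith, hx₁⟩)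
  have hfirst : 2 * x ≤ log (1 + x) - log (1 - x) := by
    simpa using le_hasSum hsum 0 fun k _ ↦ by positivity
  rw [artanh_eq_half_log ⟨by linarith, hx₁.le⟩, log_div (by linarith) (by linarith)]
  linarith

theorem Real.sqrt_sub_one_div_add_one_lt_one {t : ℝ} (ht : -1 < t) :
    √((t - 1) / (t + 1)) < 1 :=
  (sqrt_lt' one_pos).2 (by rw [one_pow, div_lt_one (by linarith)]; linarith)

theorem Real.arcosh_eq_two_mul_artanh {t : ℝ} (ht : 1 ≤ t) :
    Real.arcosh t = 2 * artanh √((t - 1) / (t + 1)) := by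
  set s := √((t - 1) / (t + 1))
  have hs₀ : 0 ≤ s := sqrt_nonneg _
  have hs₁ : s < 1 := sqrt_sub_one_div_add_one_lt_one (by linarith)
  have hs2 : s ^ 2 * (t + 1) = t - 1 := by
    rw [sq_sqrt (div_nonneg (by linarith) (by linarith)), div_mul_cancel₀ _ (by linarith)]
  have hroot : √(t ^ 2 - 1) = s * (t + 1) := by
    rw [← sqrt_sq (by positivity : 0 ≤ s * (t + 1))]
    congr 1
    linear_combination -(t + 1) * hs2
  have hx : t + s * (t + 1) = (1 + s) / (1 - s) := by
    rw [eq_div_iff (by linarith)]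
    linear_combination -hs2
  rw [artanh_eq_half_log ⟨by linarith, hs₁.le⟩, Real.arcosh, hroot, hx]
  ring

theorem arcosh_ge (t : ℝ) (ht : 1 ≤ t) :
    2 * Real.sqrt ((t - 1) / (t + 1)) ≤ arcosh t := by
  rw [show arcosh t = Real.arcosh t from rfl, Real.arcosh_eq_two_mul_artanh ht]
  gcongr
  exact Real.self_le_artanh_s8 (Real.sqrt_nonneg _)
    (Real.sqrt_sub_one_div_add_one_lt_one (by linarith))
end

section
/- For every γ ∈ (0,1) and every positive integer l, the Chebyshev polynomial of the first kind satisfies T_l(1/γ) = cosh(l·arcosh(1/γ)) ≥ (1/2)·exp(2l·√((1/γ − 1)/(1/γ + 1))). -/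
theorem arcosh_eq_real_arcosh : arcosh = Real.arcosh := rfl

namespace Real

theorem self_le_artanh_s9 {u : ℝ} (hu₀ : 0 ≤ u) (hu₁ : u < 1) : u ≤ artanh u := by
  have hsum := hasSum_log_sub_log_of_abs_lt_one (abs_lt.2 ⟨by linarith, hu₁⟩)
  have hfirst : 2 * u ≤ log (1 + u) - log (1 - u) := by
    simpa using le_hasSum hsum 0 fun _ _ ↦ by positivity
  rw [artanh_eq_half_log ⟨by linarith, hu₁.le⟩, log_div (by linarith) (by linarith)]
  linarith

theorem tanh_nonneg {y : ℝ} (hy : 0 ≤ y) : 0 ≤ tanh y := by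
  rw [tanh_eq_sinh_div_cosh]
  exact div_nonneg (sinh_nonneg_iff.2 hy) (cosh_pos y).le

theorem tanh_le_self {y : ℝ} (hy : 0 ≤ y) : tanh y ≤ y := by
  simpa only [artanh_tanh] using self_le_artanh_s9 (tanh_nonneg hy) (tanh_lt_one y)

theorem sqrt_cosh_sub_one_div_cosh_add_one {a : ℝ} (ha : 0 ≤ a) :
    √((cosh a - 1) / (cosh a + 1)) = tanh (a / 2) := by
  have hcosh : cosh a = cosh (2 * (a / 2)) := by ring_nf
  have hsq : (cosh a - 1) / (cosh a + 1) = tanh (a / 2) ^ 2 := by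
    rw [hcosh, cosh_two_mul, tanh_eq_sinh_div_cosh, div_pow, cosh_sq]
    field_simp
    ring
  rw [hsq, sqrt_sq (tanh_nonneg (by linarith))]

theorem two_mul_sqrt_sub_one_div_add_one_le_arcosh {x : ℝ} (hx : 1 ≤ x) :
    2 * √((x - 1) / (x + 1)) ≤ arcosh x := by
  have ha := arcosh_nonneg hx
  have htanh := sqrt_cosh_sub_one_div_cosh_add_one ha
  rw [cosh_arcosh hx] at htanh
  rw [htanh]
  linarith [tanh_le_self (by linarith : 0 ≤ arcosh x / 2)]

theorem exp_le_two_mul_cosh (y : ℝ) : exp y ≤ 2 * cosh y := by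
  rw [cosh_eq]
  linarith [exp_pos (-y)]

end Real

theorem chebyshev_T_at_inv_gamma_general (γ : ℝ) (hγ : γ ∈ Set.Ioo (0 : ℝ) 1) (l : ℕ) :
    (Polynomial.Chebyshev.T ℝ l).eval (1 / γ) = Real.cosh (l * arcosh (1 / γ)) ∧
    (1 / 2) * Real.exp (2 * l * Real.sqrt ((1 / γ - 1) / (1 / γ + 1))) ≤
      (Polynomial.Chebyshev.T ℝ l).eval (1 / γ) := by
  have hx : 1 ≤ 1 / γ := by
    rw [le_div_iff₀ hγ.1]
    linarith [hγ.2]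
  have hT : (Polynomial.Chebyshev.T ℝ l).eval (1 / γ) = Real.cosh (l * arcosh (1 / γ)) := by
    rw [arcosh_eq_real_arcosh]
    nth_rewrite 1 [← Real.cosh_arcosh hx]
    exact_mod_cast Polynomial.Chebyshev.T_real_cosh _ l
  refine ⟨hT, ?_⟩
  have hexp : 2 * l * √((1 / γ - 1) / (1 / γ + 1)) ≤ l * arcosh (1 / γ) := by
    rw [mul_assoc, mul_left_comm]
    exact mul_le_mul_of_nonneg_left (Real.two_mul_sqrt_sub_one_div_add_one_le_arcosh hx)
      l.cast_nonneg
  rw [hT]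
  linarith [Real.exp_le_exp.2 hexp, Real.exp_le_two_mul_cosh (l * arcosh (1 / γ))]

theorem chebyshev_T_at_inv_gamma (γ : ℝ) (hγ : γ ∈ Set.Ioo (0 : ℝ) 1) (l : ℕ) (hl : 0 < l) :
    (Polynomial.Chebyshev.T ℝ l).eval (1 / γ) = Real.cosh (l * arcosh (1 / γ)) ∧
    (1 / 2) * Real.exp (2 * l * Real.sqrt ((1 / γ - 1) / (1 / γ + 1))) ≤
      (Polynomial.Chebyshev.T ℝ l).eval (1 / γ) :=
  chebyshev_T_at_inv_gamma_general γ hγ l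
end

section
/- Let J ∈ ℝ[x] be an odd polynomial such that |J(y)| ≤ 1 for all y ∈ [−1,1] and J(y) ≥ 1 for all y ≥ 1. Then there exists an even polynomial E ∈ ℝ[x] such that: (i) J(√(1 − x²)) = √(1 − x²)·E(x) for all x ∈ [−1,1]; (ii) √(1 − x²)·|E(x)| ≤ 1 for all x ∈ [−1,1]; and (iii) for all real x, the value E(ix) (the evaluation of E at the purely imaginary complex number ix) is real and satisfies (1 + x²)·E(ix)² = J(√(1 + x²))² ≥ 1. -/
open Polynomial

lemma coeff_comp_negX (J : ℝ[X]) (k : ℕ) :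
    (J.comp (-X)).coeff k = (-1) ^ k * J.coeff k := by
  induction J using Polynomial.induction_on' with
  | add p q hp hq => simp [add_comp, hp, hq, mul_add]
  | monomial n a =>
    rw [monomial_comp, neg_pow, ← map_one (C : ℝ →+* ℝ[X]), ← map_neg, ← map_pow, ← mul_assoc,
      ← map_mul, coeff_C_mul, coeff_X_pow, coeff_monomial]
    rcases eq_or_ne n k with rfl | h
    · simp [mul_comm]
    · simp [h, Ne.symm h]

lemma sum_range_two_mul (m : ℕ) (f : ℕ → ℝ) :
    ∑ i ∈ Finset.range (2 * m), f i
      = (∑ n ∈ Finset.range m, f (2 * n)) + ∑ n ∈ Finset.range m, f (2 * n + 1) := by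
  induction m with
  | zero => simp
  | succ m ih =>
    have h2 : 2 * (m + 1) = (2 * m + 1) + 1 := by ring
    rw [h2, Finset.sum_range_succ, Finset.sum_range_succ, ih,
      Finset.sum_range_succ, Finset.sum_range_succ]
    ring

lemma odd_decomp (J : ℝ[X]) (hodd : ∀ y : ℝ, J.eval (-y) = -J.eval y) :
    ∃ G : ℝ[X], ∀ t : ℝ, J.eval t = t * G.eval (t ^ 2) := by
  have hcomp : J.comp (-X) = -J :=
    Polynomial.funext fun x => by simp [hodd]
  have heven : ∀ n : ℕ, J.coeff (2 * n) = 0 := by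
    intro n
    have := congrArg (fun p => Polynomial.coeff p (2 * n)) hcomp
    simp only [coeff_comp_negX, pow_mul, neg_one_sq, one_pow, one_mul, coeff_neg] at this
    linarith
  set N := J.natDegree with hN
  refine ⟨∑ n ∈ Finset.range (N + 1), C (J.coeff (2 * n + 1)) * X ^ n, fun t => ?_⟩
  have h1 : J.eval t = ∑ i ∈ Finset.range (2 * (N + 1)), J.coeff i * t ^ i :=
    Polynomial.eval_eq_sum_range' (by omega) t
  rw [h1, sum_range_two_mul, eval_finset_sum]
  simp only [heven, zero_mul, Finset.sum_const_zero, zero_add, eval_mul, eval_C, eval_pow, eval_X]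
  rw [Finset.mul_sum]
  exact Finset.sum_congr rfl fun n _ => by rw [← pow_mul]; ring

theorem exists_even_pell_complementary_part (J : Polynomial ℝ)
    (hodd : ∀ y : ℝ, J.eval (-y) = -J.eval y)
    (hbd : ∀ y : ℝ, y ∈ Set.Icc (-1 : ℝ) 1 → |J.eval y| ≤ 1)
    (hbig : ∀ y : ℝ, 1 ≤ y → 1 ≤ J.eval y) :
    ∃ E : Polynomial ℝ,
      (∀ x : ℝ, E.eval (-x) = E.eval x) ∧
      (∀ x : ℝ, x ∈ Set.Icc (-1 : ℝ) 1 →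
        J.eval (Real.sqrt (1 - x ^ 2)) = Real.sqrt (1 - x ^ 2) * E.eval x) ∧
      (∀ x : ℝ, x ∈ Set.Icc (-1 : ℝ) 1 → Real.sqrt (1 - x ^ 2) * |E.eval x| ≤ 1) ∧
      (∀ x : ℝ, ∃ r : ℝ,
        (E.map (algebraMap ℝ ℂ)).eval (Complex.I * (x : ℂ)) = (r : ℂ) ∧
        (1 + x ^ 2) * r ^ 2 = (J.eval (Real.sqrt (1 + x ^ 2))) ^ 2 ∧
        1 ≤ (J.eval (Real.sqrt (1 + x ^ 2))) ^ 2) := by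
  obtain ⟨G, hG⟩ := odd_decomp J hodd
  refine ⟨G.comp (1 - X ^ 2), ?_, ?_, ?_, ?_⟩
  · intro x; simp [eval_comp]
  · intro x hx
    have h1 : (0:ℝ) ≤ 1 - x ^ 2 := by
      obtain ⟨h, h'⟩ := hx; nlinarith
    have hs : Real.sqrt (1 - x ^ 2) ^ 2 = 1 - x ^ 2 := Real.sq_sqrt h1
    rw [hG, hs, eval_comp]
    simp
  · intro x hx
    have h1 : (0:ℝ) ≤ 1 - x ^ 2 := by
      obtain ⟨h, h'⟩ := hx; nlinarith
    have hs : Real.sqrt (1 - x ^ 2) ^ 2 = 1 - x ^ 2 := Real.sq_sqrt h1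
    have key : J.eval (Real.sqrt (1 - x ^ 2)) =
        Real.sqrt (1 - x ^ 2) * (G.comp (1 - X ^ 2)).eval x := by
      rw [hG, hs, eval_comp]; simp
    have hmem : Real.sqrt (1 - x ^ 2) ∈ Set.Icc (-1:ℝ) 1 := by
      constructor
      · linarith [Real.sqrt_nonneg (1 - x ^ 2)]
      · have := Real.sqrt_le_sqrt (show (1:ℝ) - x ^ 2 ≤ 1 by nlinarith)
        simpa using this
    calc Real.sqrt (1 - x ^ 2) * |(G.comp (1 - X ^ 2)).eval x|
        = |Real.sqrt (1 - x ^ 2) * (G.comp (1 - X ^ 2)).eval x| := by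
          rw [abs_mul, abs_of_nonneg (Real.sqrt_nonneg _)]
      _ = |J.eval (Real.sqrt (1 - x ^ 2))| := by rw [key]
      _ ≤ 1 := hbd _ hmem
  · intro x
    refine ⟨G.eval (1 + x ^ 2), ?_, ?_, ?_⟩
    · rw [Polynomial.map_comp, eval_comp]
      simp only [Polynomial.map_sub, Polynomial.map_one, Polynomial.map_pow, map_X, eval_sub,
        eval_one, eval_pow, eval_X]
      have : (1 : ℂ) - (Complex.I * x) ^ 2 = ((1 + x ^ 2 : ℝ) : ℂ) := by
        push_cast; rw [mul_pow, Complex.I_sq]; ring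
      rw [this, Polynomial.eval_map, ← Complex.coe_algebraMap, Polynomial.eval₂_at_apply]
    · have h1 : (0:ℝ) ≤ 1 + x ^ 2 := by positivity
      have hs : Real.sqrt (1 + x ^ 2) ^ 2 = 1 + x ^ 2 := Real.sq_sqrt h1
      rw [hG, mul_pow, hs]
    · have h1 : (1:ℝ) ≤ Real.sqrt (1 + x ^ 2) := by
        have := Real.sqrt_le_sqrt (show (1:ℝ) ≤ 1 + x ^ 2 by nlinarith)
        simpa using this
      have := hbig _ h1
      nlinarith
end

section
/- There exists a universal constant C > 0 with the following property. For all real a_min, a_max with 0 < a_min < a_max < 1, setting Δ := a_max − a_min, and for every η > 0, there exists an even polynomial P ∈ ℝ[x] with |P(x)| ≤ 1 for all x ∈ [−1,1] (hence P is semi-Pellian), such that | |P(x)|² − (x − a_min)/Δ | ≤ η for all x ∈ [a_min, a_max], and deg(P) ≤ C·η⁻¹·Δ⁻¹. -/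
open Real Finset intervalIntegral

namespace SemiPell

noncomputable def A (m n : ℕ) : ℝ := if n = 0 then (m : ℝ) else 2 * ((m : ℝ) - n)

noncomputable def H (m : ℕ) (u : ℝ) : ℝ := ∑ n ∈ range m, A m n * Real.cos (n * u)

noncomputable def D (m : ℕ) (u : ℝ) : ℝ :=
  ∑ n ∈ range (m + 1), (if n = 0 then (1 : ℝ) else 2) * Real.cos (n * u)

lemma A_self (m : ℕ) : A m m = 0 := by
  unfold A; rcases Nat.eq_zero_or_pos m with h | h
  · simp [h]
  · rw [if_neg h.ne']; ring

lemma A_succ (m n : ℕ) :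
    A (m + 1) n = A m n + (if n = 0 then (1 : ℝ) else 2) := by
  unfold A
  rcases eq_or_ne n 0 with rfl | h
  · simp
  · rw [if_neg h, if_neg h, if_neg h]; push_cast; ring

lemma H_succ (m : ℕ) (u : ℝ) : H (m + 1) u = H m u + D m u := by
  unfold H D
  have h1 : (∑ n ∈ range m, A m n * Real.cos (n * u))
      = ∑ n ∈ range (m + 1), A m n * Real.cos (n * u) := by
    rw [Finset.sum_range_succ, A_self]; ring
  rw [h1, ← Finset.sum_add_distrib]
  refine Finset.sum_congr rfl fun n hn => ?_
  rw [A_succ m n]; ring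

lemma D_succ (m : ℕ) (u : ℝ) :
    D (m + 1) u = D m u + 2 * Real.cos (((m : ℝ) + 1) * u) := by
  unfold D
  rw [Finset.sum_range_succ]
  rw [if_neg (Nat.succ_ne_zero m)]
  push_cast
  ring

lemma D_mul (m : ℕ) (u : ℝ) :
    (1 - Real.cos u) * D m u = Real.cos (m * u) - Real.cos ((m + 1) * u) := by
  induction m with
  | zero => simp [D]
  | succ m ih =>
    have key : 2 * Real.cos u * Real.cos (((m : ℝ) + 1) * u)
        = Real.cos (((m : ℝ) + 2) * u) + Real.cos ((m : ℝ) * u) := by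
      have h1 := Real.cos_add (((m : ℝ) + 1) * u) u
      have h2 := Real.cos_sub (((m : ℝ) + 1) * u) u
      have e1 : ((m : ℝ) + 1) * u + u = ((m : ℝ) + 2) * u := by ring
      have e2 : ((m : ℝ) + 1) * u - u = (m : ℝ) * u := by ring
      rw [e1] at h1; rw [e2] at h2
      linarith
    rw [D_succ, mul_add, ih]
    push_cast
    have e3 : ((m : ℝ) + 1 + 1) * u = ((m : ℝ) + 2) * u := by ring
    rw [e3]
    linarith [key]

lemma H_mul (m : ℕ) (u : ℝ) :
    (1 - Real.cos u) * H m u = 1 - Real.cos (m * u) := by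
  induction m with
  | zero => simp [H]
  | succ m ih =>
    rw [H_succ, mul_add, ih, D_mul]
    push_cast
    ring

lemma D_zero_eval (m : ℕ) : D m 0 = 2 * (m : ℝ) + 1 := by
  induction m with
  | zero => simp [D]
  | succ m ih => rw [D_succ, ih]; push_cast; simp; ring

lemma H_zero_eval (m : ℕ) : H m 0 = (m : ℝ) ^ 2 := by
  induction m with
  | zero => simp [H]
  | succ m ih => rw [H_succ, ih, D_zero_eval]; push_cast; ring

lemma H_nonneg (m : ℕ) (u : ℝ) : 0 ≤ H m u := by
  rcases lt_or_ge (Real.cos u) 1 with h | h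
  · have h1 : 0 < 1 - Real.cos u := by linarith
    have h2 : 0 ≤ 1 - Real.cos ((m : ℝ) * u) := by
      have := Real.cos_le_one ((m : ℝ) * u); linarith
    nlinarith [H_mul m u]
  · have hc : Real.cos u = 1 := le_antisymm (Real.cos_le_one u) h
    rcases (Real.cos_eq_one_iff u).mp hc with ⟨k, hk⟩
    have : ∀ n ∈ range m, A m n * Real.cos (n * u) = A m n := by
      intro n _
      have : (n : ℝ) * u = (n * k : ℤ) * (2 * π) := by
        push_cast [← hk]; ring
      rw [this, Real.cos_int_mul_two_pi, mul_one]
    unfold H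
    rw [Finset.sum_congr rfl this]
    apply Finset.sum_nonneg
    intro n hn
    unfold A
    rcases eq_or_ne n 0 with rfl | h
    · simp
    · rw [if_neg h]
      have : (n : ℝ) ≤ (m : ℝ) := by
        exact_mod_cast (Finset.mem_range.mp hn).le
      nlinarith

lemma cos_lt_one_of (u : ℝ) (h1 : u ≠ 0) (h2 : |u| ≤ π) : Real.cos u < 1 := by
  rcases lt_or_eq_of_le (Real.cos_le_one u) with h | h
  · exact h
  · exfalso
    rcases (Real.cos_eq_one_iff u).mp h with ⟨k, hk⟩
    have hk0 : k ≠ 0 := by rintro rfl; simp at hk; exact h1 hk.symm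
    have : (1 : ℝ) ≤ |(k : ℝ)| := by
      have := Int.one_le_abs hk0
      exact_mod_cast this
    have hπ : 0 < π := Real.pi_pos
    rw [← hk] at h2
    rw [abs_mul] at h2
    have : |(k:ℝ)| * (2 * π) ≥ 1 * (2 * π) := by
      apply mul_le_mul_of_nonneg_right this (by positivity)
    simp [abs_of_pos (by positivity : (0:ℝ) < 2 * π)] at h2
    nlinarith

lemma H_lower (m : ℕ) (hm : 1 ≤ m) (u : ℝ) (hu : |u| ≤ π / m) :
    4 * (m : ℝ) ^ 2 / π ^ 2 ≤ H m u := by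
  have hπ : 0 < π := Real.pi_pos
  have hm' : (1 : ℝ) ≤ (m : ℝ) := by exact_mod_cast hm
  rcases eq_or_ne u 0 with rfl | hu0
  · rw [H_zero_eval]
    rw [div_le_iff₀ (by positivity)]
    have h9 : 9 < π ^ 2 := by nlinarith [Real.pi_gt_three]
    nlinarith [sq_nonneg ((m:ℝ)), h9]
  · have hup : |u| ≤ π := le_trans hu (by
      rw [div_le_iff₀ (by positivity)]; nlinarith)
    have hcos : Real.cos u < 1 := cos_lt_one_of u hu0 hup
    have h1 : 0 < 1 - Real.cos u := by linarith
    have hmu : |(m : ℝ) * u| ≤ π := by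
      rw [abs_mul, abs_of_nonneg (by positivity : (0:ℝ) ≤ (m:ℝ))]
      calc (m : ℝ) * |u| ≤ (m : ℝ) * (π / m) :=
            mul_le_mul_of_nonneg_left hu (by positivity)
        _ = π := by field_simp
    -- 1 - cos(mu) ≥ 2/π² (mu)²
    have hlow : 2 / π ^ 2 * ((m : ℝ) * u) ^ 2 ≤ 1 - Real.cos ((m : ℝ) * u) := by
      have := Real.cos_le_one_sub_mul_cos_sq hmu
      linarith
    have hhigh : 1 - Real.cos u ≤ u ^ 2 / 2 := by
      have := Real.one_sub_sq_div_two_le_cos (x := u)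
      linarith
    have hH : H m u = (1 - Real.cos ((m:ℝ) * u)) / (1 - Real.cos u) := by
      field_simp
      linarith [H_mul m u]
    rw [hH, le_div_iff₀ h1]
    have hu2 : 0 < u ^ 2 := by positivity
    calc 4 * (m : ℝ) ^ 2 / π ^ 2 * (1 - Real.cos u)
        ≤ 4 * (m : ℝ) ^ 2 / π ^ 2 * (u ^ 2 / 2) := by
          apply mul_le_mul_of_nonneg_left hhigh (by positivity)
      _ = 2 / π ^ 2 * ((m : ℝ) * u) ^ 2 := by ring
      _ ≤ 1 - Real.cos ((m : ℝ) * u) := hlow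


lemma H_cont (m : ℕ) : Continuous (H m) := by
  apply continuous_finset_sum
  intro n _
  exact continuous_const.mul (Real.continuous_cos.comp (continuous_const.mul continuous_id))

lemma integrable_aux {f : ℝ → ℝ} (hf : Continuous f) (a b : ℝ) :
    IntervalIntegrable f MeasureTheory.volume a b := hf.intervalIntegrable a b

lemma integral_cos_nat (n : ℕ) (hn : 1 ≤ n) :
    ∫ u in (-π)..π, Real.cos (n * u) = 0 := by
  have hn' : (n : ℝ) ≠ 0 := by positivity
  have := intervalIntegral.integral_comp_mul_left (f := Real.cos) (a := -π) (b := π) hn'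
  rw [this]
  rw [integral_cos]
  have h1 : Real.sin ((n:ℝ) * π) = 0 := by exact_mod_cast Real.sin_nat_mul_pi n
  have h2 : Real.sin ((n:ℝ) * -π) = 0 := by
    have : (n:ℝ) * -π = -((n:ℝ) * π) := by ring
    rw [this, Real.sin_neg, h1, neg_zero]
  rw [h1, h2]
  simp

lemma intH (m : ℕ) : ∫ u in (-π)..π, H m u = 2 * π * m := by
  unfold H
  rw [intervalIntegral.integral_finset_sum]
  · have : ∀ n ∈ range m, (∫ u in (-π)..π, A m n * Real.cos (n * u))
        = A m n * ∫ u in (-π)..π, Real.cos (n * u) := by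
      intro n _; exact intervalIntegral.integral_const_mul _ _
    rw [Finset.sum_congr rfl this]
    rcases Nat.eq_zero_or_pos m with rfl | hm
    · simp
    · have hsplit : ∀ n ∈ range m, A m n * (∫ u in (-π)..π, Real.cos (n * u))
          = if n = 0 then 2 * π * m else 0 := by
        intro n _
        rcases eq_or_ne n 0 with rfl | h
        · simp [A]
          ring
        · rw [integral_cos_nat n (Nat.one_le_iff_ne_zero.mpr h), mul_zero, if_neg h]
      rw [Finset.sum_congr rfl hsplit, Finset.sum_ite_eq' (range m) 0 fun _ => 2 * π * (m:ℝ)]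
      simp [Finset.mem_range.mpr hm]
  · intro n _
    exact integrable_aux (continuous_const.mul (Real.continuous_cos.comp
      (continuous_const.mul continuous_id))) _ _

noncomputable def Z (m : ℕ) : ℝ := ∫ u in (-π)..π, (H m u) ^ 2

lemma H_sq_cont (m : ℕ) : Continuous (fun u => (H m u) ^ 2) := (H_cont m).pow 2

lemma Z_lower (m : ℕ) (hm : 1 ≤ m) : (m : ℝ) ^ 3 ≤ Z m := by
  have hπ : 0 < π := Real.pi_pos
  have hm' : (1 : ℝ) ≤ (m : ℝ) := by exact_mod_cast hm
  set a := π / m with ha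
  have ha0 : 0 < a := by positivity
  have haπ : a ≤ π := by
    rw [ha, div_le_iff₀ (by positivity)]
    nlinarith
  set c := 4 * (m : ℝ) ^ 2 / π ^ 2 with hc
  have hc0 : 0 ≤ c := by positivity
  have h1 : ∫ u in (-π)..(-a), (H m u)^2 ≥ 0 := by
    apply intervalIntegral.integral_nonneg (by linarith)
    intro u _; positivity
  have h2 : ∫ u in (a)..(π), (H m u)^2 ≥ 0 := by
    apply intervalIntegral.integral_nonneg (by linarith)
    intro u _; positivity
  have hmid : (2 * a) * c ^ 2 ≤ ∫ u in (-a)..a, (H m u)^2 := by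
    have : ∫ u in (-a)..a, c ^ 2 = (2 * a) * c ^ 2 := by
      rw [intervalIntegral.integral_const, smul_eq_mul]; ring
    rw [← this]
    apply intervalIntegral.integral_mono_on (by linarith)
      (integrable_aux continuous_const _ _) (integrable_aux (H_sq_cont m) _ _)
    intro x hx
    have hx' : |x| ≤ π / m := by
      rw [abs_le]; exact ⟨hx.1, hx.2⟩
    have hlow := H_lower m hm x hx'
    have hH0 := H_nonneg m x
    nlinarith
  have hsplit : Z m = (∫ u in (-π)..(-a), (H m u)^2) + (∫ u in (-a)..a, (H m u)^2)
      + (∫ u in (a)..π, (H m u)^2) := by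
    unfold Z
    rw [← intervalIntegral.integral_add_adjacent_intervals
        (integrable_aux (H_sq_cont m) (-π) (-a)) (integrable_aux (H_sq_cont m) (-a) π)]
    rw [← intervalIntegral.integral_add_adjacent_intervals
        (integrable_aux (H_sq_cont m) (-a) a) (integrable_aux (H_sq_cont m) a π)]
    ring
  have hval : (2 * a) * c ^ 2 = 32 * (m : ℝ) ^ 3 / π ^ 3 := by
    rw [ha, hc]; field_simp; ring
  have hπ4 : π < 3.1416 := by
    have := Real.pi_lt_d6; linarith
  have hfin : (m : ℝ) ^ 3 ≤ 32 * (m : ℝ) ^ 3 / π ^ 3 := by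
    rw [le_div_iff₀ (by positivity)]
    have hm3 : (0:ℝ) < (m:ℝ)^3 := by positivity
    have hπ2 : π ^ 2 < 9.87 := by nlinarith
    have hπ3 : π ^ 3 < 32 := by nlinarith
    nlinarith [hm3]
  calc (m:ℝ)^3 ≤ 32 * (m : ℝ) ^ 3 / π ^ 3 := hfin
    _ = (2 * a) * c ^ 2 := hval.symm
    _ ≤ ∫ u in (-a)..a, (H m u)^2 := hmid
    _ ≤ Z m := by rw [hsplit]; linarith

lemma int_H_sq_sin_sq (m : ℕ) :
    ∫ u in (-π)..π, (H m u) ^ 2 * Real.sin (u / 2) ^ 2 ≤ 2 * π * m := by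
  rw [← intH m]
  apply intervalIntegral.integral_mono_on (by linarith [Real.pi_pos])
    (integrable_aux ((H_sq_cont m).mul ((Real.continuous_sin.comp
      (continuous_id.div_const 2)).pow 2)) _ _)
    (integrable_aux (H_cont m) _ _)
  intro u _
  show H m u ^ 2 * Real.sin (u / 2) ^ 2 ≤ H m u
  have hsin : Real.sin (u / 2) ^ 2 = 1 / 2 - Real.cos u / 2 := by
    have h1 := Real.sin_sq_add_cos_sq (u / 2)
    have h2 := Real.cos_sq (u / 2)
    rw [show 2 * (u / 2) = u by ring] at h2
    linarith
  have hmul := H_mul m u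
  have h0 := H_nonneg m u
  have hcos : -1 ≤ Real.cos ((m:ℝ) * u) := Real.neg_one_le_cos _
  -- H² sin² = H * (1 - cos(mu))/2 ≤ H
  have : (H m u) ^ 2 * Real.sin (u / 2) ^ 2 = H m u * ((1 - Real.cos ((m:ℝ) * u)) / 2) := by
    rw [hsin]
    nlinarith [hmul]
  rw [this]
  nlinarith

noncomputable def M (m : ℕ) : ℝ := ∫ u in (-π)..π, (H m u) ^ 2 * |u|

lemma M_bound (m : ℕ) (hm : 1 ≤ m) : M m ≤ 9 / m * Z m := by
  have hπ : 0 < π := Real.pi_pos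
  have hm' : (1 : ℝ) ≤ (m : ℝ) := by exact_mod_cast hm
  have hm0 : (0 : ℝ) < (m : ℝ) := by linarith
  have csin : Continuous fun u : ℝ => Real.sin (u / 2) := by fun_prop
  have c2 : Continuous fun u : ℝ => (H m u) ^ 2 * Real.sin (u / 2) ^ 2 :=
    (H_sq_cont m).mul (csin.pow 2)
  have step1 : M m ≤ ∫ u in (-π)..π,
      (3 * π / (2 * m) * (H m u) ^ 2 + π * m / 6 * ((H m u) ^ 2 * Real.sin (u / 2) ^ 2)) := by
    unfold M
    apply intervalIntegral.integral_mono_on (by linarith)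
      (integrable_aux ((H_sq_cont m).mul continuous_abs) _ _)
      (integrable_aux ((continuous_const.mul (H_sq_cont m)).add (continuous_const.mul c2)) _ _)
    intro u hu
    show H m u ^ 2 * |u| ≤ 3 * π / (2 * ↑m) * H m u ^ 2
        + π * ↑m / 6 * (H m u ^ 2 * Real.sin (u / 2) ^ 2)
    have hu2 : |u / 2| ≤ π / 2 := by
      rw [abs_le] at *
      constructor <;> [linarith [hu.1]; linarith [hu.2]]
    have hj := Real.mul_abs_le_abs_sin hu2
    have hju : |u| ≤ π * |Real.sin (u / 2)| := by
      calc |u| = π * (2 / π * (|u| / 2)) := by field_simp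
        _ ≤ π * |Real.sin (u / 2)| := by
            rw [abs_div, abs_of_pos (by norm_num : (0:ℝ) < 2)] at hj
            apply mul_le_mul_of_nonneg_left hj hπ.le
    have hamgm : |Real.sin (u / 2)| ≤ (1/2) * (3 / m + (m / 3) * Real.sin (u/2) ^ 2) := by
      set s := |Real.sin (u/2)| with hs
      have hs2 : s ^ 2 = Real.sin (u/2) ^ 2 := sq_abs _
      have key : 6 * m * s ≤ 9 + m ^ 2 * s ^ 2 := by
        nlinarith [sq_nonneg ((m:ℝ) * s - 3)]
      have h1 : s ≤ (9 + m ^ 2 * s ^ 2) / (6 * m) := by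
        rw [le_div_iff₀ (by positivity)]; linarith
      have h2 : (9 + (m:ℝ) ^ 2 * s ^ 2) / (6 * m) = (1/2) * (3 / m + (m / 3) * s ^ 2) := by
        field_simp; ring
      rw [← hs2]
      linarith [h1, h2.le, h2.ge]
    have hH2 : (0:ℝ) ≤ (H m u) ^ 2 := sq_nonneg _
    calc (H m u) ^ 2 * |u| ≤ (H m u) ^ 2 * (π * |Real.sin (u/2)|) :=
          mul_le_mul_of_nonneg_left hju hH2
      _ ≤ (H m u) ^ 2 * (π * ((1/2) * (3 / m + (m / 3) * Real.sin (u/2) ^ 2))) := by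
          apply mul_le_mul_of_nonneg_left _ hH2
          exact mul_le_mul_of_nonneg_left hamgm hπ.le
      _ = 3 * π / (2 * m) * (H m u) ^ 2
          + π * m / 6 * ((H m u) ^ 2 * Real.sin (u/2) ^ 2) := by
          field_simp; ring
  have hsplitI : (∫ u in (-π)..π,
      (3 * π / (2 * m) * (H m u) ^ 2 + π * m / 6 * ((H m u) ^ 2 * Real.sin (u / 2) ^ 2)))
      = 3 * π / (2 * m) * Z m
        + π * m / 6 * ∫ u in (-π)..π, (H m u) ^ 2 * Real.sin (u / 2) ^ 2 := by
    rw [intervalIntegral.integral_add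
        ((integrable_aux (H_sq_cont m) _ _).const_mul _)
        ((integrable_aux c2 _ _).const_mul _),
      intervalIntegral.integral_const_mul, intervalIntegral.integral_const_mul]
    rfl
  have step2 : π * m / 6 * (∫ u in (-π)..π, (H m u) ^ 2 * Real.sin (u / 2) ^ 2)
      ≤ π * m / 6 * (2 * π * m) :=
    mul_le_mul_of_nonneg_left (int_H_sq_sin_sq m) (by positivity)
  have hZ := Z_lower m hm
  have hπ4 : π < 3.1416 := by have := Real.pi_lt_d6; linarith
  have step3 : π * m / 6 * (2 * π * m) ≤ π ^ 2 / 3 * (Z m / m) := by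
    have h : π * m / 6 * (2 * π * m) = π ^ 2 / 3 * ((m:ℝ) ^ 3 / m) := by
      field_simp; ring
    rw [h]
    gcongr
  have hZ0 : (0:ℝ) < Z m := lt_of_lt_of_le (by positivity) hZ
  have he1 : 3 * π / (2 * m) * Z m = (3 * π / 2) * (Z m / m) := by
    field_simp
  have hcoef : 3 * π / 2 + π ^ 2 / 3 ≤ 9 := by nlinarith
  have hq : (0:ℝ) < Z m / m := by positivity
  have he2 : π ^ 2 / 3 * (Z m / m) + (3 * π / 2) * (Z m / m) ≤ 9 * (Z m / m) := by
    nlinarith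
  have he3 : 9 * (Z m / m) = 9 / m * Z m := by field_simp
  linarith


lemma abs_cos_sub_cos (a b : ℝ) : |Real.cos a - Real.cos b| ≤ |a - b| := by
  rw [Real.cos_sub_cos]
  rw [abs_mul, abs_mul]
  have h1 : |Real.sin ((a + b) / 2)| ≤ 1 := Real.abs_sin_le_one _
  have h2 : |Real.sin ((a - b) / 2)| ≤ |(a - b) / 2| := Real.abs_sin_le_abs
  have h3 : |(-2 : ℝ)| = 2 := by norm_num
  rw [h3]
  calc 2 * |Real.sin ((a + b) / 2)| * |Real.sin ((a - b) / 2)|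
      ≤ 2 * 1 * |(a - b) / 2| := by
        apply mul_le_mul _ h2 (abs_nonneg _) (by norm_num)
        nlinarith [abs_nonneg (Real.sin ((a+b)/2))]
    _ = |a - b| := by rw [abs_div]; rw [show |(2:ℝ)| = 2 by norm_num]; ring

lemma sqrt_half_cos (u : ℝ) : Real.sqrt ((1 + Real.cos u) / 2) = |Real.cos (u / 2)| := by
  have h2 := Real.cos_sq (u / 2)
  rw [show 2 * (u / 2) = u by ring] at h2
  rw [show (1 + Real.cos u) / 2 = Real.cos (u / 2) ^ 2 by linarith]
  exact Real.sqrt_sq_eq_abs _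

/-- the clamped target function -/
noncomputable def Vt (lo d e0 : ℝ) (u : ℝ) : ℝ :=
  max e0 (min 1 ((Real.sqrt ((1 + Real.cos u) / 2) - lo) / d))

noncomputable def St (lo d e0 : ℝ) (u : ℝ) : ℝ := Real.sqrt (Vt lo d e0 u)

lemma Vt_cont (lo d e0 : ℝ) : Continuous (Vt lo d e0) := by
  apply continuous_const.max
  apply continuous_const.min
  apply Continuous.div_const
  apply Continuous.sub _ continuous_const
  apply Real.continuous_sqrt.comp
  fun_prop

lemma St_cont (lo d e0 : ℝ) : Continuous (St lo d e0) :=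
  Real.continuous_sqrt.comp (Vt_cont lo d e0)

lemma Vt_ge (lo d e0 u : ℝ) : e0 ≤ Vt lo d e0 u := le_max_left _ _

lemma Vt_le (lo d e0 u : ℝ) (he : e0 ≤ 1) : Vt lo d e0 u ≤ 1 :=
  max_le he (min_le_left _ _)

lemma Vt_periodic (lo d e0 : ℝ) : Function.Periodic (Vt lo d e0) (2 * π) := by
  intro u; unfold Vt; rw [Real.cos_add_two_pi]

lemma Vt_even (lo d e0 u : ℝ) : Vt lo d e0 (-u) = Vt lo d e0 u := by
  unfold Vt; rw [Real.cos_neg]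

lemma St_periodic (lo d e0 : ℝ) : Function.Periodic (St lo d e0) (2 * π) := by
  intro u; unfold St; rw [Vt_periodic lo d e0 u]

lemma St_even (lo d e0 u : ℝ) : St lo d e0 (-u) = St lo d e0 u := by
  unfold St; rw [Vt_even]

lemma St_le_one (lo d e0 u : ℝ) (he : e0 ≤ 1) : St lo d e0 u ≤ 1 := by
  unfold St
  rw [show (1:ℝ) = Real.sqrt 1 by simp]
  exact Real.sqrt_le_sqrt (Vt_le lo d e0 u he)

lemma St_nonneg (lo d e0 u : ℝ) : 0 ≤ St lo d e0 u := Real.sqrt_nonneg _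

lemma Vt_lip (lo d e0 : ℝ) (hd : 0 < d) (x y : ℝ) :
    |Vt lo d e0 x - Vt lo d e0 y| ≤ |x - y| / (2 * d) := by
  unfold Vt
  set A := (Real.sqrt ((1 + Real.cos x) / 2) - lo) / d with hA
  set B := (Real.sqrt ((1 + Real.cos y) / 2) - lo) / d with hB
  have hAB : |A - B| ≤ |x - y| / (2 * d) := by
    rw [hA, hB, div_sub_div_same, abs_div, abs_of_pos hd]
    rw [div_le_div_iff₀ hd (by positivity)]
    have hg : |Real.sqrt ((1 + Real.cos x) / 2) - Real.sqrt ((1 + Real.cos y) / 2)|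
        ≤ |x - y| / 2 := by
      rw [sqrt_half_cos, sqrt_half_cos]
      refine le_trans (abs_abs_sub_abs_le_abs_sub _ _) ?_
      refine le_trans (abs_cos_sub_cos _ _) ?_
      rw [show x/2 - y/2 = (x-y)/2 by ring, abs_div, show |(2:ℝ)| = 2 by norm_num]
    have h1 : Real.sqrt ((1 + Real.cos x) / 2) - lo - (Real.sqrt ((1 + Real.cos y) / 2) - lo)
        = Real.sqrt ((1 + Real.cos x) / 2) - Real.sqrt ((1 + Real.cos y) / 2) := by ring
    rw [h1]
    calc |Real.sqrt ((1 + Real.cos x) / 2) - Real.sqrt ((1 + Real.cos y) / 2)| * (2 * d)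
        ≤ (|x - y| / 2) * (2 * d) := by
          apply mul_le_mul_of_nonneg_right hg (by positivity)
      _ = |x - y| * d := by ring
  calc |max e0 (min 1 A) - max e0 (min 1 B)|
      ≤ max |e0 - e0| |min 1 A - min 1 B| := abs_max_sub_max_le_max _ _ _ _
    _ = |min 1 A - min 1 B| := by simp
    _ ≤ max |(1:ℝ) - 1| |A - B| := abs_min_sub_min_le_max _ _ _ _
    _ = |A - B| := by simp
    _ ≤ |x - y| / (2 * d) := hAB

lemma sqrt_diff_le (a b : ℝ) (ha : 0 ≤ a) (hb : 0 < b) :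
    |Real.sqrt a - Real.sqrt b| ≤ |a - b| / Real.sqrt b := by
  have hsb : 0 < Real.sqrt b := Real.sqrt_pos.mpr hb
  have key : |Real.sqrt a - Real.sqrt b| * Real.sqrt b ≤ |a - b| := by
    have h1 : |Real.sqrt a - Real.sqrt b| * Real.sqrt b
        ≤ |Real.sqrt a - Real.sqrt b| * (Real.sqrt a + Real.sqrt b) := by
      apply mul_le_mul_of_nonneg_left _ (abs_nonneg _)
      nlinarith [Real.sqrt_nonneg a]
    have h2 : |Real.sqrt a - Real.sqrt b| * (Real.sqrt a + Real.sqrt b) = |a - b| := by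
      rw [← abs_of_nonneg (show (0:ℝ) ≤ Real.sqrt a + Real.sqrt b by positivity), ← abs_mul]
      congr 1
      rw [show (Real.sqrt a - Real.sqrt b) * (Real.sqrt a + Real.sqrt b)
          = Real.sqrt a ^ 2 - Real.sqrt b ^ 2 by ring]
      rw [Real.sq_sqrt ha, Real.sq_sqrt hb.le]
    linarith
  rw [le_div_iff₀ hsb]
  exact key

lemma St_diff_le (lo d e0 : ℝ) (he0 : 0 < e0) (x y : ℝ) :
    |St lo d e0 x - St lo d e0 y| ≤ |Vt lo d e0 x - Vt lo d e0 y| / Real.sqrt (Vt lo d e0 y) := by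
  unfold St
  apply sqrt_diff_le
  · linarith [Vt_ge lo d e0 x]
  · linarith [Vt_ge lo d e0 y]


noncomputable def cg (lo d e0 : ℝ) (g : ℤ) : ℝ :=
  ∫ v in (-π)..π, Real.cos (g * v) * St lo d e0 v

noncomputable def p (m : ℕ) (lo d e0 : ℝ) (φ : ℝ) : ℝ :=
  (Z m)⁻¹ * ∫ u in (-π)..π, (H m u) ^ 2 * St lo d e0 (φ - u)

lemma odd_int_zero (lo d e0 : ℝ) (g : ℤ) :
    ∫ v in (-π)..π, Real.sin (g * v) * St lo d e0 v = 0 := by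
  set f : ℝ → ℝ := fun w => Real.sin (g * w) * St lo d e0 w with hf
  have h := intervalIntegral.integral_comp_neg (a := -π) (b := π) f
  rw [neg_neg] at h
  have h2 : (fun x => f (-x)) = fun x => -(f x) := by
    funext x
    rw [hf]
    simp only
    rw [show (g:ℝ) * -x = -((g:ℝ) * x) by ring, Real.sin_neg, St_even]
    ring
  rw [h2] at h
  rw [intervalIntegral.integral_neg] at h
  linarith

lemma shift_int (m : ℕ) (lo d e0 : ℝ) (g : ℤ) (φ : ℝ) :
    ∫ u in (-π)..π, Real.cos (g * u) * St lo d e0 (φ - u)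
      = Real.cos (g * φ) * cg lo d e0 g := by
  set f : ℝ → ℝ := fun v => Real.cos (g * (φ - v)) * St lo d e0 v with hf
  have hfc : Continuous f := by
    apply Continuous.mul _ (St_cont lo d e0)
    fun_prop
  have h1 : (fun u => Real.cos (g * u) * St lo d e0 (φ - u)) = fun u => f (φ - u) := by
    funext u
    rw [hf]; simp only
    rw [show φ - (φ - u) = u by ring]
  rw [h1, intervalIntegral.integral_comp_sub_left f φ, sub_neg_eq_add]
  have hper : Function.Periodic f (2 * π) := by
    intro v
    rw [hf]; simp only
    rw [(St_periodic lo d e0) v]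
    congr 1
    rw [show (g:ℝ) * (φ - (v + 2 * π)) = (g:ℝ) * (φ - v) - g * (2 * π) by ring]
    exact Real.cos_sub_int_mul_two_pi _ g
  have hshift : ∫ v in (φ - π)..(φ + π), f v = ∫ v in (-π)..π, f v := by
    have := hper.intervalIntegral_add_eq (φ - π) (-π)
    rw [show φ - π + 2 * π = φ + π by ring, show -π + 2 * π = π by ring] at this
    exact this
  rw [hshift]
  have hsplit : ∀ v, f v = Real.cos (g * φ) * (Real.cos (g * v) * St lo d e0 v)
      + Real.sin (g * φ) * (Real.sin (g * v) * St lo d e0 v) := by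
    intro v
    rw [hf]; simp only
    rw [show (g:ℝ) * (φ - v) = (g:ℝ) * φ - g * v by ring, Real.cos_sub]
    ring
  rw [intervalIntegral.integral_congr (g := fun v => Real.cos (g * φ) * (Real.cos (g * v) * St lo d e0 v)
      + Real.sin (g * φ) * (Real.sin (g * v) * St lo d e0 v)) (fun v _ => hsplit v)]
  have hc1 : Continuous fun v : ℝ => Real.cos (g * v) * St lo d e0 v := by
    apply Continuous.mul _ (St_cont lo d e0); fun_prop
  have hc2 : Continuous fun v : ℝ => Real.sin (g * v) * St lo d e0 v := by
    apply Continuous.mul _ (St_cont lo d e0); fun_prop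
  rw [intervalIntegral.integral_add ((hc1.intervalIntegrable _ _).const_mul _)
      ((hc2.intervalIntegrable _ _).const_mul _)]
  rw [intervalIntegral.integral_const_mul, intervalIntegral.integral_const_mul]
  rw [odd_int_zero]
  unfold cg
  ring


lemma Z_pos (m : ℕ) (hm : 1 ≤ m) : 0 < Z m := by
  have := Z_lower m hm
  have hm' : (0:ℝ) < (m:ℝ)^3 := by
    have : (1:ℝ) ≤ (m:ℝ) := by exact_mod_cast hm
    positivity
  linarith

lemma St_shift_cont (lo d e0 φ : ℝ) : Continuous fun u : ℝ => St lo d e0 (φ - u) :=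
  (St_cont lo d e0).comp (by fun_prop)

lemma p_bound (m : ℕ) (hm : 1 ≤ m) (lo d e0 : ℝ) (he1 : e0 ≤ 1) (φ : ℝ) :
    |p m lo d e0 φ| ≤ 1 := by
  have hZ := Z_pos m hm
  have hint1 : IntervalIntegrable (fun u => (H m u) ^ 2 * St lo d e0 (φ - u))
      MeasureTheory.volume (-π) π :=
    ((H_sq_cont m).mul (St_shift_cont lo d e0 φ)).intervalIntegrable _ _
  have hint2 : IntervalIntegrable (fun u => (H m u) ^ 2) MeasureTheory.volume (-π) π :=
    (H_sq_cont m).intervalIntegrable _ _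
  have hup : ∫ u in (-π)..π, (H m u) ^ 2 * St lo d e0 (φ - u) ≤ Z m := by
    unfold Z
    apply intervalIntegral.integral_mono_on (by linarith [Real.pi_pos]) hint1 hint2
    intro u _
    have h1 := St_le_one lo d e0 (φ - u) he1
    have h2 := St_nonneg lo d e0 (φ - u)
    nlinarith [sq_nonneg (H m u)]
  have hlow : -(Z m) ≤ ∫ u in (-π)..π, (H m u) ^ 2 * St lo d e0 (φ - u) := by
    have hneg : -(Z m) = ∫ u in (-π)..π, -((H m u) ^ 2) := by
      unfold Z; rw [intervalIntegral.integral_neg]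
    rw [hneg]
    apply intervalIntegral.integral_mono_on (by linarith [Real.pi_pos]) hint2.neg hint1
    intro u _
    have h1 := St_le_one lo d e0 (φ - u) he1
    have h2 := St_nonneg lo d e0 (φ - u)
    show -(H m u ^ 2) ≤ H m u ^ 2 * St lo d e0 (φ - u)
    nlinarith [sq_nonneg (H m u)]
  unfold p
  rw [abs_mul, abs_of_pos (inv_pos.mpr hZ)]
  have habs : |∫ u in (-π)..π, (H m u) ^ 2 * St lo d e0 (φ - u)| ≤ Z m :=
    abs_le.mpr ⟨by linarith, hup⟩
  calc (Z m)⁻¹ * |∫ u in (-π)..π, (H m u) ^ 2 * St lo d e0 (φ - u)|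
      ≤ (Z m)⁻¹ * Z m := by
        apply mul_le_mul_of_nonneg_left habs (by positivity)
    _ = 1 := inv_mul_cancel₀ hZ.ne'


lemma p_err (m : ℕ) (hm : 1 ≤ m) (lo d e0 : ℝ) (hd : 0 < d) (he0 : 0 < e0) (φ : ℝ) :
    |p m lo d e0 φ - St lo d e0 φ| ≤ (M m / Z m) / (2 * d * Real.sqrt (Vt lo d e0 φ)) := by
  have hZ := Z_pos m hm
  have hV : 0 < Vt lo d e0 φ := lt_of_lt_of_le he0 (Vt_ge lo d e0 φ)
  have hsV : 0 < Real.sqrt (Vt lo d e0 φ) := Real.sqrt_pos.mpr hV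
  have hint1 : IntervalIntegrable (fun u => (H m u) ^ 2 * St lo d e0 (φ - u))
      MeasureTheory.volume (-π) π :=
    ((H_sq_cont m).mul (St_shift_cont lo d e0 φ)).intervalIntegrable _ _
  have hint2 : IntervalIntegrable (fun u => (H m u) ^ 2 * St lo d e0 φ)
      MeasureTheory.volume (-π) π :=
    ((H_sq_cont m).mul continuous_const).intervalIntegrable _ _
  have hintd : IntervalIntegrable
      (fun u => (H m u) ^ 2 * St lo d e0 (φ - u) - (H m u) ^ 2 * St lo d e0 φ)
      MeasureTheory.volume (-π) π := hint1.sub hint2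
  have hintabs : IntervalIntegrable
      (fun u => (H m u) ^ 2 * |u| * (1 / (2 * d * Real.sqrt (Vt lo d e0 φ))))
      MeasureTheory.volume (-π) π :=
    (((H_sq_cont m).mul continuous_abs).mul continuous_const).intervalIntegrable _ _
  -- rewrite p - St as scaled integral of differences
  have hrepr : p m lo d e0 φ - St lo d e0 φ
      = (Z m)⁻¹ * ∫ u in (-π)..π,
          ((H m u) ^ 2 * St lo d e0 (φ - u) - (H m u) ^ 2 * St lo d e0 φ) := by
    rw [intervalIntegral.integral_sub hint1 hint2]
    have h2 : (∫ u in (-π)..π, (H m u) ^ 2 * St lo d e0 φ) = Z m * St lo d e0 φ := by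
      rw [intervalIntegral.integral_mul_const]; rfl
    unfold p
    rw [h2]
    field_simp
  -- pointwise bound
  have hpt : ∀ u ∈ Set.Icc (-π) π,
      |(H m u) ^ 2 * St lo d e0 (φ - u) - (H m u) ^ 2 * St lo d e0 φ|
        ≤ (H m u) ^ 2 * |u| * (1 / (2 * d * Real.sqrt (Vt lo d e0 φ))) := by
    intro u _
    have hH2 : (0:ℝ) ≤ (H m u) ^ 2 := sq_nonneg _
    have hSd := St_diff_le lo d e0 he0 (φ - u) φ
    have hVd := Vt_lip lo d e0 hd (φ - u) φ
    rw [show φ - u - φ = -u by ring, abs_neg] at hVd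
    have hchain : |St lo d e0 (φ - u) - St lo d e0 φ|
        ≤ |u| * (1 / (2 * d * Real.sqrt (Vt lo d e0 φ))) := by
      calc |St lo d e0 (φ - u) - St lo d e0 φ|
          ≤ |Vt lo d e0 (φ - u) - Vt lo d e0 φ| / Real.sqrt (Vt lo d e0 φ) := hSd
        _ ≤ (|u| / (2 * d)) / Real.sqrt (Vt lo d e0 φ) := by gcongr
        _ = |u| * (1 / (2 * d * Real.sqrt (Vt lo d e0 φ))) := by
            field_simp
    calc |(H m u) ^ 2 * St lo d e0 (φ - u) - (H m u) ^ 2 * St lo d e0 φ|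
        = (H m u) ^ 2 * |St lo d e0 (φ - u) - St lo d e0 φ| := by
          rw [← mul_sub, abs_mul, abs_of_nonneg hH2]
      _ ≤ (H m u) ^ 2 * (|u| * (1 / (2 * d * Real.sqrt (Vt lo d e0 φ)))) :=
          mul_le_mul_of_nonneg_left hchain hH2
      _ = (H m u) ^ 2 * |u| * (1 / (2 * d * Real.sqrt (Vt lo d e0 φ))) := by ring
  -- integral bound
  have hintbound : |∫ u in (-π)..π,
      ((H m u) ^ 2 * St lo d e0 (φ - u) - (H m u) ^ 2 * St lo d e0 φ)|
      ≤ M m * (1 / (2 * d * Real.sqrt (Vt lo d e0 φ))) := by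
    have hub : ∫ u in (-π)..π,
        ((H m u) ^ 2 * St lo d e0 (φ - u) - (H m u) ^ 2 * St lo d e0 φ)
        ≤ M m * (1 / (2 * d * Real.sqrt (Vt lo d e0 φ))) := by
      have : M m * (1 / (2 * d * Real.sqrt (Vt lo d e0 φ)))
          = ∫ u in (-π)..π, (H m u) ^ 2 * |u| * (1 / (2 * d * Real.sqrt (Vt lo d e0 φ))) := by
        unfold M; rw [intervalIntegral.integral_mul_const]
      rw [this]
      apply intervalIntegral.integral_mono_on (by linarith [Real.pi_pos]) hintd hintabs
      intro u hu
      have := hpt u hu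
      have h1 := abs_le.mp this
      exact (le_abs_self _).trans this
    have hlb : -(M m * (1 / (2 * d * Real.sqrt (Vt lo d e0 φ))))
        ≤ ∫ u in (-π)..π,
          ((H m u) ^ 2 * St lo d e0 (φ - u) - (H m u) ^ 2 * St lo d e0 φ) := by
      have heq : -(M m * (1 / (2 * d * Real.sqrt (Vt lo d e0 φ))))
          = ∫ u in (-π)..π, -((H m u) ^ 2 * |u| * (1 / (2 * d * Real.sqrt (Vt lo d e0 φ)))) := by
        rw [intervalIntegral.integral_neg]
        congr 1
        unfold M; rw [intervalIntegral.integral_mul_const]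
      rw [heq]
      apply intervalIntegral.integral_mono_on (by linarith [Real.pi_pos]) hintabs.neg hintd
      intro u hu
      have := (abs_le.mp (hpt u hu)).1
      show -((H m u) ^ 2 * |u| * (1 / (2 * d * Real.sqrt (Vt lo d e0 φ))))
          ≤ (H m u) ^ 2 * St lo d e0 (φ - u) - (H m u) ^ 2 * St lo d e0 φ
      linarith
    rw [abs_le]
    exact ⟨hlb, hub⟩
  rw [hrepr, abs_mul, abs_of_pos (inv_pos.mpr hZ)]
  calc (Z m)⁻¹ * |∫ u in (-π)..π,
        ((H m u) ^ 2 * St lo d e0 (φ - u) - (H m u) ^ 2 * St lo d e0 φ)|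
      ≤ (Z m)⁻¹ * (M m * (1 / (2 * d * Real.sqrt (Vt lo d e0 φ)))) :=
        mul_le_mul_of_nonneg_left hintbound (by positivity)
    _ = (M m / Z m) / (2 * d * Real.sqrt (Vt lo d e0 φ)) := by
        field_simp


lemma p_eq (m : ℕ) (lo d e0 : ℝ) (φ : ℝ) :
    p m lo d e0 φ = ∑ n ∈ range m, ∑ n' ∈ range m,
      (Z m)⁻¹ * (A m n * A m n' / 2) *
        (Real.cos (((n + n' : ℤ) : ℝ) * φ) * cg lo d e0 ((n : ℤ) + n')
          + Real.cos (((((n : ℤ) - n' : ℤ)) : ℝ) * φ) * cg lo d e0 ((n : ℤ) - n')) := by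
  have hcont : ∀ g : ℤ, Continuous fun u : ℝ => Real.cos ((g : ℝ) * u) * St lo d e0 (φ - u) := by
    intro g
    exact (by fun_prop : Continuous fun u : ℝ => Real.cos ((g:ℝ) * u)).mul
      (St_shift_cont lo d e0 φ)
  set F : ℕ → ℕ → ℝ → ℝ := fun n n' u =>
      A m n * A m n' / 2 *
        (Real.cos (((n + n' : ℤ) : ℝ) * u) * St lo d e0 (φ - u)
          + Real.cos (((((n : ℤ) - n' : ℤ)) : ℝ) * u) * St lo d e0 (φ - u)) with hF
  have hFcont : ∀ n n', Continuous (F n n') := by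
    intro n n'
    exact continuous_const.mul ((hcont _).add (hcont _))
  have hpt : ∀ (n n' : ℕ) (u : ℝ),
      (A m n * Real.cos (n * u)) * (A m n' * Real.cos (n' * u)) * St lo d e0 (φ - u)
        = F n n' u := by
    intro n n' u
    have hcs : Real.cos ((n:ℝ) * u + (n':ℝ) * u) + Real.cos ((n:ℝ) * u - (n':ℝ) * u)
        = 2 * (Real.cos ((n:ℝ) * u) * Real.cos ((n':ℝ) * u)) := by
      rw [Real.cos_add, Real.cos_sub]; ring
    have e1 : ((n + n' : ℤ) : ℝ) * u = (n:ℝ) * u + (n':ℝ) * u := by push_cast; ring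
    have e2 : ((((n : ℤ) - n' : ℤ)) : ℝ) * u = (n:ℝ) * u - (n':ℝ) * u := by push_cast; ring
    rw [hF]; simp only
    rw [e1, e2]
    linear_combination (-(St lo d e0 (φ - u) * A m n * A m n' / 2)) * hcs
  have hH2 : ∀ u : ℝ, (H m u) ^ 2 * St lo d e0 (φ - u)
      = ∑ n ∈ range m, ∑ n' ∈ range m, F n n' u := by
    intro u
    unfold H
    rw [sq, Finset.sum_mul_sum, Finset.sum_mul]
    refine Finset.sum_congr rfl fun n _ => ?_
    rw [Finset.sum_mul]
    exact Finset.sum_congr rfl fun n' _ => hpt n n' u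
  unfold p
  rw [intervalIntegral.integral_congr
    (g := fun u => ∑ n ∈ range m, ∑ n' ∈ range m, F n n' u) (fun u _ => hH2 u)]
  rw [intervalIntegral.integral_finset_sum (fun n _ =>
    (continuous_finset_sum _ fun n' _ => hFcont n n').intervalIntegrable _ _)]
  have hinner : ∀ n ∈ range m, (∫ u in (-π)..π, ∑ n' ∈ range m, F n n' u)
      = ∑ n' ∈ range m, A m n * A m n' / 2 *
          (Real.cos (((n + n' : ℤ) : ℝ) * φ) * cg lo d e0 ((n : ℤ) + n')
            + Real.cos (((((n : ℤ) - n' : ℤ)) : ℝ) * φ) * cg lo d e0 ((n : ℤ) - n')) := by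
    intro n _
    rw [intervalIntegral.integral_finset_sum (fun n' _ => (hFcont n n').intervalIntegrable _ _)]
    refine Finset.sum_congr rfl fun n' _ => ?_
    rw [hF]; simp only
    rw [intervalIntegral.integral_const_mul,
      intervalIntegral.integral_add ((hcont ((n:ℤ) + n')).intervalIntegrable _ _)
        ((hcont ((n:ℤ) - n')).intervalIntegrable _ _)]
    have hs1 := shift_int m lo d e0 ((n : ℤ) + n') φ
    have hs2 := shift_int m lo d e0 ((n : ℤ) - n') φ
    push_cast at hs1 hs2 ⊢
    rw [hs1, hs2]
  rw [Finset.sum_congr rfl hinner, Finset.mul_sum]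
  refine Finset.sum_congr rfl fun n _ => ?_
  rw [Finset.mul_sum]
  refine Finset.sum_congr rfl fun n' _ => ?_
  push_cast
  ring


open Polynomial in
noncomputable def Tc (g : ℤ) : Polynomial ℝ :=
  (Polynomial.Chebyshev.T ℝ g).comp (2 * Polynomial.X ^ 2 - 1)

lemma Tc_eval (g : ℤ) (θ : ℝ) : (Tc g).eval (Real.cos θ) = Real.cos (g * (2 * θ)) := by
  unfold Tc
  rw [Polynomial.eval_comp]
  have h : (2 * Polynomial.X ^ 2 - 1 : Polynomial ℝ).eval (Real.cos θ) = Real.cos (2 * θ) := by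
    simp [Real.cos_two_mul]
  rw [h, Polynomial.Chebyshev.T_real_cos]

lemma Tc_even (g : ℤ) (x : ℝ) : (Tc g).eval (-x) = (Tc g).eval x := by
  unfold Tc
  rw [Polynomial.eval_comp, Polynomial.eval_comp]
  congr 1
  simp

lemma natDegree_T_le_nat : ∀ k : ℕ, (Polynomial.Chebyshev.T ℝ (k : ℤ)).natDegree ≤ k := by
  intro k
  induction k using Nat.strong_induction_on with
  | _ k ih =>
    match k with
    | 0 => simp [Polynomial.Chebyshev.T_zero]
    | 1 => simp [Polynomial.Chebyshev.T_one]
    | (k + 2) =>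
      have h := Polynomial.Chebyshev.T_add_two ℝ (k : ℤ)
      rw [show ((k : ℤ) + 2) = ((k + 2 : ℕ) : ℤ) by push_cast; ring] at h
      rw [h]
      apply le_trans (Polynomial.natDegree_sub_le _ _)
      have h1 : (2 * Polynomial.X * Polynomial.Chebyshev.T ℝ ((k:ℤ) + 1)).natDegree ≤ k + 2 := by
        apply le_trans (Polynomial.natDegree_mul_le)
        have h2 : (2 * Polynomial.X : Polynomial ℝ).natDegree ≤ 1 := by
          apply le_trans (Polynomial.natDegree_mul_le)
          simp
        have h3 : (Polynomial.Chebyshev.T ℝ ((k:ℤ) + 1)).natDegree ≤ k + 1 := by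
          rw [show ((k : ℤ) + 1) = ((k + 1 : ℕ) : ℤ) by push_cast; ring]
          exact ih (k + 1) (by omega)
        omega
      have h4 : (Polynomial.Chebyshev.T ℝ (k : ℤ)).natDegree ≤ k := ih k (by omega)
      rw [max_le_iff]
      exact ⟨h1, by omega⟩

lemma natDegree_T_le (g : ℤ) : (Polynomial.Chebyshev.T ℝ g).natDegree ≤ g.natAbs := by
  rw [← Polynomial.Chebyshev.T_natAbs]
  exact natDegree_T_le_nat g.natAbs

lemma natDegree_Tc_le (g : ℤ) : (Tc g).natDegree ≤ 2 * g.natAbs := by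
  unfold Tc
  apply le_trans Polynomial.natDegree_comp_le
  have h2 : (2 * Polynomial.X ^ 2 - 1 : Polynomial ℝ).natDegree ≤ 2 := by
    apply le_trans (Polynomial.natDegree_sub_le _ _)
    rw [max_le_iff]
    constructor
    · apply le_trans (Polynomial.natDegree_mul_le)
      simp [Polynomial.natDegree_X_pow]
    · simp
  calc (Polynomial.Chebyshev.T ℝ g).natDegree * (2 * Polynomial.X ^ 2 - 1 :
        Polynomial ℝ).natDegree ≤ g.natAbs * 2 :=
        Nat.mul_le_mul (natDegree_T_le g) h2
    _ = 2 * g.natAbs := by ring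

noncomputable def Pc (m : ℕ) (lo d e0 : ℝ) : Polynomial ℝ :=
  ∑ n ∈ range m, ∑ n' ∈ range m,
    ((Z m)⁻¹ * (A m n * A m n' / 2)) •
      (cg lo d e0 ((n : ℤ) + n') • Tc ((n : ℤ) + n')
        + cg lo d e0 ((n : ℤ) - n') • Tc ((n : ℤ) - n'))

lemma Pc_eval_cos (m : ℕ) (lo d e0 : ℝ) (θ : ℝ) :
    (Pc m lo d e0).eval (Real.cos θ) = p m lo d e0 (2 * θ) := by
  rw [p_eq m lo d e0 (2 * θ)]
  unfold Pc
  rw [Polynomial.eval_finset_sum]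
  refine Finset.sum_congr rfl fun n _ => ?_
  rw [Polynomial.eval_finset_sum]
  refine Finset.sum_congr rfl fun n' _ => ?_
  rw [Polynomial.eval_smul, Polynomial.eval_add, Polynomial.eval_smul, Polynomial.eval_smul,
    Tc_eval, Tc_eval]
  push_cast
  simp only [smul_eq_mul]
  ring

lemma Pc_even (m : ℕ) (lo d e0 : ℝ) (x : ℝ) :
    (Pc m lo d e0).eval (-x) = (Pc m lo d e0).eval x := by
  unfold Pc
  rw [Polynomial.eval_finset_sum, Polynomial.eval_finset_sum]
  refine Finset.sum_congr rfl fun n _ => ?_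
  rw [Polynomial.eval_finset_sum, Polynomial.eval_finset_sum]
  refine Finset.sum_congr rfl fun n' _ => ?_
  rw [Polynomial.eval_smul, Polynomial.eval_smul, Polynomial.eval_add, Polynomial.eval_add,
    Polynomial.eval_smul, Polynomial.eval_smul, Polynomial.eval_smul, Polynomial.eval_smul,
    Tc_even, Tc_even]

lemma Pc_natDegree (m : ℕ) (lo d e0 : ℝ) : (Pc m lo d e0).natDegree ≤ 4 * m := by
  unfold Pc
  apply Polynomial.natDegree_sum_le_of_forall_le
  intro n hn
  apply Polynomial.natDegree_sum_le_of_forall_le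
  intro n' hn'
  apply le_trans (Polynomial.natDegree_smul_le _ _)
  apply le_trans (Polynomial.natDegree_add_le _ _)
  rw [max_le_iff]
  have hn2 : n < m := Finset.mem_range.mp hn
  have hn2' : n' < m := Finset.mem_range.mp hn'
  constructor
  · apply le_trans (Polynomial.natDegree_smul_le _ _)
    apply le_trans (natDegree_Tc_le _)
    have : ((n : ℤ) + n').natAbs ≤ 2 * m := by omega
    omega
  · apply le_trans (Polynomial.natDegree_smul_le _ _)
    apply le_trans (natDegree_Tc_le _)
    have : ((n : ℤ) - n').natAbs ≤ 2 * m := by omega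
    omega

end SemiPell

set_option maxHeartbeats 2000000 in
open SemiPell in
theorem exists_line_approx_semi_pellian_poly :
    ∃ C : ℝ, 0 < C ∧
      ∀ aMin aMax : ℝ, 0 < aMin → aMin < aMax → aMax < 1 →
        ∀ η : ℝ, 0 < η →
          ∃ P : Polynomial ℝ,
            (∀ x : ℝ, P.eval (-x) = P.eval x) ∧
            (∀ x : ℝ, x ∈ Set.Icc (-1 : ℝ) 1 → |P.eval x| ≤ 1) ∧
            (∀ x : ℝ, x ∈ Set.Icc aMin aMax →
              |(|P.eval x| ^ 2 - (x - aMin) / (aMax - aMin))| ≤ η) ∧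
            (P.natDegree : ℝ) ≤ C * η⁻¹ * (aMax - aMin)⁻¹ := by
  refine ⟨300, by norm_num, ?_⟩
  intro aMin aMax h0 hlt h1 η hη
  set d := aMax - aMin with hd
  have hd0 : 0 < d := by simp [hd]; linarith
  have hd1 : d < 1 := by simp [hd]; linarith
  rcases le_or_gt 1 η with hη1 | hη1
  · -- trivial case: P = 0
    refine ⟨0, by simp, by simp, ?_, ?_⟩
    · intro x hx
      have hx1 : aMin ≤ x := hx.1
      have hx2 : x ≤ aMax := hx.2
      have hl0 : 0 ≤ (x - aMin) / d := div_nonneg (by linarith) hd0.le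
      have hl1 : (x - aMin) / d ≤ 1 := by
        rw [div_le_one hd0]; simp [hd]; linarith
      simp only [Polynomial.eval_zero, abs_zero]
      rw [show (0:ℝ) ^ 2 - (x - aMin) / d = -((x - aMin) / d) by ring, abs_neg,
        abs_of_nonneg hl0]
      linarith
    · simp only [Polynomial.natDegree_zero, Nat.cast_zero]
      positivity
  · -- main case
    set e0 := η / 4 with he0def
    have he00 : 0 < e0 := by positivity
    have he01 : e0 ≤ 1 := by rw [he0def]; linarith
    set m : ℕ := ⌈(72 : ℝ) / (η * d)⌉₊ with hmdef
    have hηd : 0 < η * d := by positivity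
    have hm0 : (72 : ℝ) / (η * d) ≤ m := Nat.le_ceil _
    have hm1 : 1 ≤ m := by
      rw [hmdef]
      rw [Nat.one_le_ceil_iff]
      exact div_pos (by norm_num) hηd
    have hmR : (1 : ℝ) ≤ (m : ℝ) := by exact_mod_cast hm1
    have hmup : (m : ℝ) < 72 / (η * d) + 1 := Nat.ceil_lt_add_one (by positivity)
    refine ⟨Pc m aMin d e0, fun x => Pc_even m aMin d e0 x, ?_, ?_, ?_⟩
    · -- bounded by 1 on [-1,1]
      intro x hx
      have hcos : Real.cos (Real.arccos x) = x := Real.cos_arccos hx.1 hx.2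
      rw [← hcos, Pc_eval_cos]
      exact p_bound m hm1 aMin d e0 he01 _
    · -- approximation on [aMin, aMax]
      intro x hx
      have hx1 : aMin ≤ x := hx.1
      have hx2 : x ≤ aMax := hx.2
      have hx0 : 0 < x := lt_of_lt_of_le h0 hx1
      have hxI1 : -1 ≤ x := by linarith
      have hxI2 : x ≤ 1 := by linarith
      have hcos : Real.cos (Real.arccos x) = x := Real.cos_arccos hxI1 hxI2
      set θ := Real.arccos x with hθ
      set ℓ := (x - aMin) / d with hℓ
      have hℓ0 : 0 ≤ ℓ := div_nonneg (by linarith) hd0.le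
      have hℓ1 : ℓ ≤ 1 := by
        rw [hℓ, div_le_one hd0]; simp [hd]; linarith
      have hVt : Vt aMin d e0 (2 * θ) = max e0 ℓ := by
        unfold Vt
        rw [Real.cos_two_mul, hcos]
        rw [show (1 + (2 * x ^ 2 - 1)) / 2 = x ^ 2 by ring]
        rw [Real.sqrt_sq hx0.le]
        rw [min_eq_right hℓ1]
      set V := max e0 ℓ with hV
      set S := Real.sqrt V with hS
      have hV4 : e0 ≤ V := le_max_left _ _
      have hV0 : 0 < V := lt_of_lt_of_le he00 hV4
      have hVl : ℓ ≤ V := le_max_right _ _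
      have hVle : V ≤ ℓ + e0 := by
        rw [hV]
        rcases max_cases e0 ℓ with ⟨h, _⟩ | ⟨h, _⟩ <;> rw [h] <;> linarith
      have hS0 : 0 < S := Real.sqrt_pos.mpr hV0
      have hS2 : S ^ 2 = V := Real.sq_sqrt hV0.le
      set pp := p m aMin d e0 (2 * θ) with hpp
      have heval : (Pc m aMin d e0).eval x = pp := by
        rw [← hcos, Pc_eval_cos]
      -- error estimate
      have herr0 := p_err m hm1 aMin d e0 hd0 he00 (2 * θ)
      rw [hVt] at herr0
      have hSt : St aMin d e0 (2 * θ) = S := by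
        unfold St; rw [hVt]
      rw [hSt] at herr0
      have hMZ : M m / Z m ≤ η * d / 8 := by
        have hZ := Z_pos m hm1
        have hmpos : (0:ℝ) < (m:ℝ) := by linarith
        have h9 : M m / Z m ≤ 9 / m := by
          rw [div_le_div_iff₀ hZ hmpos]
          have := M_bound m hm1
          calc M m * m = m * M m := by ring
            _ ≤ m * (9 / m * Z m) := by
                apply mul_le_mul_of_nonneg_left this hmpos.le
            _ = 9 * Z m := by field_simp
        have hm72 : (72:ℝ) ≤ η * d * m := by
          rw [div_le_iff₀ hηd] at hm0
          calc (72:ℝ) ≤ ↑m * (η * d) := hm0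
            _ = η * d * ↑m := by ring
        calc M m / Z m ≤ 9 / m := h9
          _ ≤ η * d / 8 := by
            rw [div_le_div_iff₀ hmpos (by norm_num)]
            linarith [hm72]
      have hden : (0:ℝ) < 2 * d * S := mul_pos (mul_pos two_pos hd0) hS0
      have he : |pp - S| ≤ η / (16 * S) := by
        calc |pp - S| ≤ (M m / Z m) / (2 * d * S) := herr0
          _ ≤ (η * d / 8) / (2 * d * S) := by
              exact div_le_div_of_nonneg_right hMZ hden.le
          _ = η / (16 * S) := by field_simp; ring
      -- quadratic error bound
      have habs : |pp ^ 2 - V| ≤ |pp - S| * (|pp - S| + 2 * S) := by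
        have hfac : pp ^ 2 - V = (pp - S) * (pp + S) := by rw [← hS2]; ring
        rw [hfac, abs_mul]
        apply mul_le_mul_of_nonneg_left _ (abs_nonneg _)
        calc |pp + S| = |(pp - S) + 2 * S| := by ring_nf
          _ ≤ |pp - S| + |2 * S| := abs_add_le _ _
          _ = |pp - S| + 2 * S := by rw [abs_of_nonneg (by linarith : (0:ℝ) ≤ 2 * S)]
      have h1 : |pp - S| * (2 * S) ≤ η / 8 := by
        calc |pp - S| * (2 * S) ≤ (η / (16 * S)) * (2 * S) :=
              mul_le_mul_of_nonneg_right he (by linarith)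
          _ = η / 8 := by field_simp; ring
      have h2 : |pp - S| * |pp - S| ≤ η / 64 := by
        have ha : |pp - S| * |pp - S| ≤ (η / (16 * S)) * (η / (16 * S)) := by
          apply mul_le_mul he he (abs_nonneg _) (div_nonneg hη.le (by linarith))
        have hb : (η / (16 * S)) * (η / (16 * S)) = η ^ 2 / (256 * V) := by
          rw [← hS2]; field_simp; ring
        have hc : η ^ 2 / (256 * V) ≤ η / 64 := by
          rw [div_le_div_iff₀ (by linarith : (0:ℝ) < 256 * V) (by norm_num)]
          have hmul : η ^ 2 / 4 ≤ η * V := by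
            calc η ^ 2 / 4 = η * (η / 4) := by ring
              _ ≤ η * V := mul_le_mul_of_nonneg_left hV4 hη.le
          have : η * (256 * V) = 256 * (η * V) := by ring
          linarith
        linarith
      have hVdiff : |V - ℓ| ≤ e0 := by
        rw [abs_of_nonneg (by linarith)]
        linarith
      have hq : |pp ^ 2 - ℓ| ≤ η := by
        calc |pp ^ 2 - ℓ| ≤ |pp ^ 2 - V| + |V - ℓ| := abs_sub_le _ _ _
          _ ≤ |pp - S| * (|pp - S| + 2 * S) + e0 := by linarith [habs, hVdiff]
          _ = |pp - S| * |pp - S| + |pp - S| * (2 * S) + e0 := by ring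
          _ ≤ η / 64 + η / 8 + η / 4 := by
              have : e0 ≤ η / 4 := by rw [he0def]
              linarith [h1, h2]
          _ ≤ η := by linarith
      rw [heval, sq_abs]
      exact hq
    · -- degree bound
      have hdeg := Pc_natDegree m aMin d e0
      have : ((Pc m aMin d e0).natDegree : ℝ) ≤ 4 * m := by exact_mod_cast hdeg
      have h4m : (4 : ℝ) * m ≤ 292 / (η * d) := by
        have h1 : (1:ℝ) ≤ 1 / (η * d) := by
          rw [le_div_iff₀ hηd, one_mul]
          exact mul_le_one₀ hη1.le hd0.le hd1.le
        calc (4:ℝ) * m ≤ 4 * (72 / (η * d) + 1) := by linarith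
          _ = 288 / (η * d) + 4 * 1 := by ring
          _ ≤ 288 / (η * d) + 4 * (1 / (η * d)) := by linarith
          _ = 292 / (η * d) := by ring
      calc ((Pc m aMin d e0).natDegree : ℝ) ≤ 4 * m := this
        _ ≤ 292 / (η * d) := h4m
        _ ≤ 300 / (η * d) := by
            exact div_le_div_of_nonneg_right (by norm_num) hηd.le
        _ = 300 * η⁻¹ * d⁻¹ := by rw [div_eq_mul_inv, mul_inv]; ring
end

section
/- There exists a universal constant C > 0 with the following property. Let τ, η ∈ (0,1), let κ := (1/2)·√(2·ln(2/(π·τ²))), let 0 < a_min < a_max < 1, set Δ := a_max − a_min and a_mid := (a_min + a_max)/2, and let k satisfy 1 ≤ k ≤ 2/Δ and a_mid ≥ κ/k. Then there exists an even polynomial P ∈ ℝ[x] with 0 ≤ P(a) ≤ 1 for all a ∈ [−1,1] (hence P is semi-Pellian), such that: for all a ∈ [a_min, a_mid], P(a) ≤ 1/2 + 0.11·k·(a − a_mid) + η + 0.25·τ; for all a ∈ [a_mid, a_max], P(a) ≥ 1/2 + 0.11·k·(a − a_mid) − η − 0.25·τ; and deg(P) ≤ C·√((k² + ln(1/η))·ln(1/η)).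 -/
/-!
If the ramp `0.11 k (a - a_mid)` stays within `η + τ/4` of `0` on `[a_min, a_max]`, the constant `1/2`
works. Otherwise `τ < 0.44`, so `κ ≥ 0.7` and `k a_mid ≥ 0.7`, and we use
`P(a) = (1 + sin (2N arcsin (β a) - Ω)) / 2`, which is the even polynomial
`(1 - (-1)^m T_N (1 - 2 β² a²)) / 2` built from the Chebyshev polynomial `T_N`.
Here `Ω = π/2 + m π` is the first odd multiple of `π/2` above `0.41 k a_mid`, and `N`, `β` are chosen
with `2N arcsin (β a_mid) = Ω`. On `[a_min, a_max]` the phase `2N arcsin (β a) - Ω` is, up to a factor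
`1.01`, the linear function `2Nβ (a - a_mid)`, whose slope is about `Ω / a_mid ≥ 0.4 k`, and it stays
in `[-1.6, 1.6]`, where `|sin t| ≥ 0.55 |t|`. The degree `2N ≈ 20 Ω / a_mid` is `O(k)`.
-/

open Real Polynomial

theorem sub_le_arcsin_sub_arcsin {x y : ℝ} (hx : -1 ≤ x) (hxy : x ≤ y) (hy : y ≤ 1) :
    y - x ≤ arcsin y - arcsin x := by
  have h := abs_sin_sub_sin_le (arcsin y) (arcsin x)
  rwa [sin_arcsin (hx.trans hxy) hy, sin_arcsin hx (hxy.trans hy), abs_of_nonneg (sub_nonneg.2 hxy),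
    abs_of_nonneg (sub_nonneg.2 (arcsin_le_arcsin hxy))] at h

theorem arcsin_sub_arcsin_le {x y : ℝ} (hx : 0 ≤ x) (hxy : x ≤ y) (hy : y ≤ 0.1) :
    arcsin y - arcsin x ≤ 1.01 * (y - x) := by
  refine (convex_Icc (0 : ℝ) 0.1).image_sub_le_mul_sub_of_deriv_le continuous_arcsin.continuousOn
    ?_ ?_ x ⟨hx, hxy.trans hy⟩ y ⟨hx.trans hxy, hy⟩ hxy
  all_goals rw [interior_Icc]
  · intro t ⟨ht₀, ht₁⟩
    exact (differentiableAt_arcsin.2 ⟨by linarith, by linarith⟩).differentiableWithinAt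
  · intro t ⟨ht₀, ht₁⟩
    have hsqrt : 0.994 ≤ √(1 - t ^ 2) := le_sqrt_of_sq_le (by nlinarith)
    rw [deriv_arcsin, div_le_iff₀ (by linarith)]
    linarith

theorem le_sin_mul_arcsin_sub {L x y : ℝ} (hL : 0 ≤ L) (hx : 0 ≤ x) (hxy : x ≤ y) (hy : y ≤ 0.1)
    (hwin : L * (y - x) ≤ π / 2) : 0.55 * (L * (y - x)) ≤ sin (L * (arcsin y - arcsin x)) := by
  set δ := L * (arcsin y - arcsin x)
  have hlo : L * (y - x) ≤ δ :=
    mul_le_mul_of_nonneg_left (sub_le_arcsin_sub_arcsin (by linarith) hxy (by linarith)) hL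
  have hhi : δ ≤ 1.6 := calc
    δ ≤ L * (1.01 * (y - x)) := mul_le_mul_of_nonneg_left (arcsin_sub_arcsin_le hx hxy hy) hL
    _ = 1.01 * (L * (y - x)) := by ring
    _ ≤ 1.01 * (π / 2) := by gcongr
    _ ≤ 1.6 := by linarith [pi_lt_d2]
  have hδ : 0 ≤ δ := (mul_nonneg hL (sub_nonneg.2 hxy)).trans hlo
  have hcube : δ ^ 3 ≤ 2.56 * δ := by nlinarith [mul_le_mul hhi hhi hδ (by norm_num)]
  linarith [sin_ge_sub_cube hδ]

noncomputable def chebyshevSigmoid (m N : ℕ) (β : ℝ) : ℝ[X] :=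
  C (1 / 2) * (1 - C ((-1) ^ m) * (Chebyshev.T ℝ N).comp (1 - C (2 * β ^ 2) * X ^ 2))

namespace chebyshevSigmoid

variable (m N : ℕ) (β : ℝ)

theorem eval_neg (x : ℝ) :
    (chebyshevSigmoid m N β).eval (-x) = (chebyshevSigmoid m N β).eval x := by
  simp [chebyshevSigmoid, eval_comp]

theorem natDegree_le : (chebyshevSigmoid m N β).natDegree ≤ 2 * N := by
  unfold chebyshevSigmoid
  refine (natDegree_C_mul_le _ _).trans ((natDegree_sub_le _ _).trans ?_)
  rw [natDegree_one, zero_max]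
  refine (natDegree_C_mul_le _ _).trans ?_
  rw [natDegree_comp, Chebyshev.natDegree_T, Int.natAbs_natCast, mul_comm]
  gcongr
  compute_degree

theorem eval_eq {a : ℝ} (h₁ : -1 ≤ β * a) (h₂ : β * a ≤ 1) :
    (chebyshevSigmoid m N β).eval a =
      (1 + sin (2 * N * arcsin (β * a) - (π / 2 + m * π))) / 2 := by
  have hcos : 1 - 2 * β ^ 2 * a ^ 2 = cos (2 * arcsin (β * a)) := by
    rw [cos_two_mul_eq_one_sub, sin_arcsin h₁ h₂]; ring
  have hphase : sin (2 * N * arcsin (β * a) - (π / 2 + m * π)) =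
      -((-1) ^ m * cos (N * (2 * arcsin (β * a)))) := by
    rw [show 2 * N * arcsin (β * a) - (π / 2 + m * π) =
      (N * (2 * arcsin (β * a)) - m * π) - π / 2 by ring, sin_sub_pi_div_two, cos_sub_nat_mul_pi]
  simp only [chebyshevSigmoid, eval_mul, eval_sub, eval_one, eval_C, eval_comp, eval_pow, eval_X,
    hcos]
  rw [hphase, Chebyshev.T_real_cos, Int.cast_natCast]
  ring

theorem eval_eq_half_add_sin {μ a : ℝ} (hphase : 2 * N * arcsin (β * μ) = π / 2 + m * π)
    (h₁ : -1 ≤ β * a) (h₂ : β * a ≤ 1) :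
    (chebyshevSigmoid m N β).eval a =
      1 / 2 + sin (2 * N * (arcsin (β * a) - arcsin (β * μ))) / 2 := by
  rw [eval_eq m N β h₁ h₂, ← hphase]
  ring_nf

variable {m N β} {μ a : ℝ}

theorem mem_Icc (hβ : |β| ≤ 1) (ha : a ∈ Set.Icc (-1) 1) :
    (chebyshevSigmoid m N β).eval a ∈ Set.Icc 0 1 := by
  have hβa : |β * a| ≤ 1 := by
    rw [abs_mul]; exact mul_le_one₀ hβ (abs_nonneg _) (abs_le.2 ha)
  rw [eval_eq m N β (abs_le.1 hβa).1 (abs_le.1 hβa).2]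
  constructor <;> linarith [neg_one_le_sin (2 * N * arcsin (β * a) - (π / 2 + m * π)),
    sin_le_one (2 * N * arcsin (β * a) - (π / 2 + m * π))]

theorem half_add_mul_le_eval (hphase : 2 * N * arcsin (β * μ) = π / 2 + m * π) (hβ : 0 < β)
    (hμ : 0 ≤ μ) (hμa : μ ≤ a) (ha : β * a ≤ 0.1) (hwin : 2 * N * β * (a - μ) ≤ π / 2) :
    1 / 2 + 0.275 * (2 * N * β) * (a - μ) ≤ (chebyshevSigmoid m N β).eval a := by
  have hβμ : 0 ≤ β * μ := mul_nonneg hβ.le hμ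
  have hβa : β * μ ≤ β * a := mul_le_mul_of_nonneg_left hμa hβ.le
  rw [eval_eq_half_add_sin m N β hphase (by linarith) (by linarith)]
  have := le_sin_mul_arcsin_sub (L := 2 * N) (by positivity) hβμ hβa ha (by linarith)
  linarith

theorem eval_le_half_add_mul (hphase : 2 * N * arcsin (β * μ) = π / 2 + m * π) (hβ : 0 < β)
    (ha : 0 ≤ a) (haμ : a ≤ μ) (hμ : β * μ ≤ 0.1) (hwin : 2 * N * β * (μ - a) ≤ π / 2) :
    (chebyshevSigmoid m N β).eval a ≤ 1 / 2 + 0.275 * (2 * N * β) * (a - μ) := by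
  have hβa : 0 ≤ β * a := mul_nonneg hβ.le ha
  have hβμ : β * a ≤ β * μ := mul_le_mul_of_nonneg_left haμ hβ.le
  rw [eval_eq_half_add_sin m N β hphase (by linarith) (by linarith), ← neg_sub (arcsin _),
    mul_neg, sin_neg]
  have := le_sin_mul_arcsin_sub (L := 2 * N) (by positivity) hβa hβμ hμ (by linarith)
  linarith

end chebyshevSigmoid

theorem exists_odd_mul_pi_div_two_between (x : ℝ) :
    ∃ m : ℕ, x ≤ π / 2 + m * π ∧ π / 2 + m * π ≤ max (π / 2) (3 * x) := by
  have hdiv : (x / π - 1 / 2) * π = x - π / 2 := by field_simp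
  refine ⟨⌈x / π - 1 / 2⌉₊, ?_, ?_⟩
  · nlinarith [mul_le_mul_of_nonneg_right (Nat.le_ceil (x / π - 1 / 2)) pi_pos.le]
  · rcases Nat.eq_zero_or_pos ⌈x / π - 1 / 2⌉₊ with h | h
    · rw [h, Nat.cast_zero, zero_mul, add_zero]
      exact le_max_left _ _
    · have hlt := mul_lt_mul_of_pos_right (Nat.ceil_lt_add_one (Nat.ceil_pos.1 h).le) pi_pos
      have hpos := mul_lt_mul_of_pos_right (Nat.ceil_pos.1 h) pi_pos
      refine le_max_of_le_right ?_
      nlinarith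

theorem exists_nat_mul_arcsin_eq {Ω μ : ℝ} (hΩ : 0 < Ω) (hμ : 0 < μ) (hμ1 : μ ≤ 1) :
    ∃ (N : ℕ) (β : ℝ), 0 < β ∧ β ≤ 1 / 20 ∧ 2 * N * arcsin (β * μ) = Ω ∧
      0.99 * Ω ≤ 2 * N * β * μ ∧ 2 * N * β * μ ≤ Ω ∧ N * μ ≤ 10 * Ω + μ := by
  set N := ⌈10 * Ω / μ⌉₊
  have hNμ : 10 * Ω ≤ N * μ := (div_le_iff₀ hμ).1 (Nat.le_ceil _)
  have hN : (0 : ℝ) < N := by nlinarith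
  set ξ := Ω / (2 * N)
  have hξ : 2 * N * ξ = Ω := by simp only [ξ]; field_simp
  have hξ0 : 0 < ξ := by positivity
  have hξμ : 20 * ξ ≤ μ := by nlinarith
  have hsin : sin ξ ≤ ξ := sin_le hξ0.le
  have hcube : ξ ^ 3 ≤ 0.06 * ξ := by nlinarith [mul_le_mul hξμ hξμ (by positivity) hμ.le]
  have hsinlo : 0.99 * ξ ≤ sin ξ := by linarith [sin_ge_sub_cube hξ0.le]
  have hβμ : sin ξ / μ * μ = sin ξ := div_mul_cancel₀ _ hμ.ne'
  refine ⟨N, sin ξ / μ, div_pos (by linarith) hμ, ?_, ?_, ?_, ?_, ?_⟩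
  · rw [div_le_iff₀ hμ]; linarith
  · rw [hβμ, arcsin_sin (by linarith [pi_pos]) (by linarith [pi_gt_three]), hξ]
  · rw [mul_assoc, hβμ]; nlinarith
  · rw [mul_assoc, hβμ]; nlinarith
  · have hceil := Nat.ceil_lt_add_one (by positivity : 0 ≤ 10 * Ω / μ)
    have := (lt_div_iff₀ hμ).1 (by linarith : (N : ℝ) - 1 < 10 * Ω / μ)
    linarith

theorem exists_even_poly_ramp {k μ d : ℝ} (hk : 1 ≤ k) (hd : 0 ≤ d) (hdμ : d ≤ μ) (hμ : μ ≤ 1)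
    (hkd : k * d ≤ 1) (hkμ : 0.7 ≤ k * μ) :
    ∃ P : ℝ[X], (∀ x, P.eval (-x) = P.eval x) ∧
      (∀ a ∈ Set.Icc (-1 : ℝ) 1, P.eval a ∈ Set.Icc 0 1) ∧
      (∀ a ∈ Set.Icc (μ - d) μ, P.eval a ≤ 1 / 2 + 0.11 * k * (a - μ)) ∧
      (∀ a ∈ Set.Icc μ (μ + d), 1 / 2 + 0.11 * k * (a - μ) ≤ P.eval a) ∧
      (P.natDegree : ℝ) ≤ 50 * k := by
  have hμ0 : 0 < μ := by nlinarith
  obtain ⟨m, hΩlo, hΩhi⟩ := exists_odd_mul_pi_div_two_between (0.41 * (k * μ))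
  obtain ⟨N, β, hβ0, hβ, hphase, hslo, hshi, hN⟩ :=
    exists_nat_mul_arcsin_eq (Ω := π / 2 + m * π) (by positivity) hμ0 hμ
  set s := 2 * N * β
  have hks : 0.4 * k ≤ s := le_of_mul_le_mul_right (by nlinarith) hμ0
  have hsd : s * d ≤ π / 2 := by
    refine le_of_mul_le_mul_right ?_ hμ0
    rcases le_max_iff.1 hΩhi with h | h <;> nlinarith [pi_gt_three]
  have hdeg : 2 * (N : ℝ) ≤ 50 * k := by
    refine le_of_mul_le_mul_right ?_ hμ0
    rcases le_max_iff.1 hΩhi with h | h <;> nlinarith [pi_lt_d2]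
  refine ⟨chebyshevSigmoid m N β, chebyshevSigmoid.eval_neg m N β,
    fun a ha => chebyshevSigmoid.mem_Icc (by rw [abs_of_pos hβ0]; linarith) ha, ?_, ?_, ?_⟩
  · rintro a ⟨ha₁, ha₂⟩
    have := chebyshevSigmoid.eval_le_half_add_mul hphase hβ0 (by linarith) ha₂ (by nlinarith)
      (by nlinarith)
    nlinarith
  · rintro a ⟨ha₁, ha₂⟩
    have := chebyshevSigmoid.half_add_mul_le_eval hphase hβ0 hμ0.le ha₁ (by nlinarith)
      (by nlinarith)
    nlinarith
  · exact (Nat.cast_le.2 (chebyshevSigmoid.natDegree_le m N β)).trans (by push_cast; exact hdeg)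

theorem one_le_log_two_div_pi_mul_sq {τ : ℝ} (hτ₀ : 0 < τ) (hτ : τ < 0.44) :
    1 ≤ log (2 / (π * τ ^ 2)) := by
  have hπτ : π * τ ^ 2 < 0.61 := by nlinarith [pi_lt_d2]
  rw [le_log_iff_exp_le (by positivity), le_div_iff₀ (by positivity)]
  nlinarith [exp_one_lt_d9, mul_lt_mul_of_pos_left hπτ (exp_pos 1)]

theorem one_le_log_one_div {η : ℝ} (hη₀ : 0 < η) (hη : η < 0.11) : 1 ≤ log (1 / η) := by
  rw [le_log_iff_exp_le (by positivity), le_div_iff₀ hη₀]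
  nlinarith [exp_one_lt_d9]

theorem le_sqrt_sq_add_mul {k L : ℝ} (hL : 1 ≤ L) : k ≤ √((k ^ 2 + L) * L) :=
  le_sqrt_of_sq_le (by nlinarith)

theorem exists_hybrid_poly :
    ∃ C : ℝ, 0 < C ∧
      ∀ τ η : ℝ, τ ∈ Set.Ioo (0 : ℝ) 1 → η ∈ Set.Ioo (0 : ℝ) 1 →
      ∀ aMin aMax : ℝ, 0 < aMin → aMin < aMax → aMax < 1 →
      ∀ k : ℝ, 1 ≤ k → k ≤ 2 / (aMax - aMin) →
        (1 / 2) * Real.sqrt (2 * Real.log (2 / (Real.pi * τ ^ 2))) / k ≤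
          (aMin + aMax) / 2 →
        ∃ P : Polynomial ℝ,
          (∀ x : ℝ, P.eval (-x) = P.eval x) ∧
          (∀ a : ℝ, a ∈ Set.Icc (-1 : ℝ) 1 → 0 ≤ P.eval a ∧ P.eval a ≤ 1) ∧
          (∀ a : ℝ, a ∈ Set.Icc aMin ((aMin + aMax) / 2) →
            P.eval a ≤ 1 / 2 + 0.11 * k * (a - (aMin + aMax) / 2) + η + 0.25 * τ) ∧
          (∀ a : ℝ, a ∈ Set.Icc ((aMin + aMax) / 2) aMax →
            1 / 2 + 0.11 * k * (a - (aMin + aMax) / 2) - η - 0.25 * τ ≤ P.eval a) ∧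
          (P.natDegree : ℝ) ≤
            C * Real.sqrt ((k ^ 2 + Real.log (1 / η)) * Real.log (1 / η)) := by
  refine ⟨50, by norm_num, ?_⟩
  rintro τ η ⟨hτ₀, -⟩ ⟨hη₀, -⟩ aMin aMax hMin hlt hMax k hk hkΔ hκ
  have hMin' : aMin = (aMin + aMax) / 2 - (aMax - aMin) / 2 := by ring
  have hMax' : aMax = (aMin + aMax) / 2 + (aMax - aMin) / 2 := by ring
  have hkd : k * ((aMax - aMin) / 2) ≤ 1 := by
    have := (le_div_iff₀ (by linarith)).1 hkΔ; linarith
  set μ := (aMin + aMax) / 2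
  set d := (aMax - aMin) / 2
  by_cases hslack : 0.11 * k * d ≤ η + 0.25 * τ
  · refine ⟨C (1 / 2), by simp, by norm_num, fun a ⟨ha, _⟩ => ?_, fun a ⟨_, ha⟩ => ?_, by simp⟩ <;>
      simp only [eval_C] <;> nlinarith
  have hτ : τ < 0.44 := by nlinarith
  have hkμ : 0.7 ≤ k * μ := by
    have hsqrt : 1.4 ≤ √(2 * log (2 / (π * τ ^ 2))) :=
      le_sqrt_of_sq_le (by linarith [one_le_log_two_div_pi_mul_sq hτ₀ hτ])
    have := (div_le_iff₀ (by linarith)).1 hκ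
    linarith
  obtain ⟨P, heven, hbounded, hleft, hright, hdeg⟩ :=
    exists_even_poly_ramp hk (by linarith) (by linarith) (by linarith) hkd hkμ
  refine ⟨P, heven, hbounded, fun a ha => ?_, fun a ha => ?_, ?_⟩
  · linarith [hleft a (hMin' ▸ ha)]
  · linarith [hright a (hMax' ▸ ha)]
  · have hlog := one_le_log_one_div hη₀ (by nlinarith)
    have := le_sqrt_sq_add_mul (k := k) hlog
    linarith
end

section
/- Let γ, δ > 0 with γ ≤ 1/2, let m := ⌈(1/2)·γ⁻²·ln(1/δ)⌉, and let x ∈ [0,1]. Let S be a binomial random variable counting heads in m independent coin tosses each with heads-probability x². Then: if x ≥ 1/2 + γ, the probability that S > m·(1/4 + γ²) is at least 1 − δ; and if x ≤ 1/2 − γ, the probability that S > m·(1/4 + γ²) is at most δ. -/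
/-!
By Hoeffding's lemma a Bernoulli(`p`) variable satisfies
`p eᵗ + 1 - p ≤ exp (p t + t² / 8)` for every real `t`, so the moment generating function of a
binomial variable `S` with parameters `m, p` is at most `exp (m (p t + t² / 8))`. Markov's
inequality applied to `exp (± t S)` with `t = 4ε` bounds each tail beyond `m (p ± ε)` by
`exp (-2 m ε²)`. The threshold `m (1/4 + γ²)` sits at distance at least `m γ` from `m x²`
whenever `|x - 1/2| ≥ γ`, because `(1/2 ± γ)² = 1/4 + γ² ± γ`, and `exp (-2 m γ²) ≤ δ` is the
choice of `m`.
-/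

open MeasureTheory ProbabilityTheory Finset

/-- `binomialPMF m p s` is the probability that a binomial random variable with
parameters `m` and `p` takes the value `s`. -/
noncomputable def binomialPMF (m : ℕ) (p : ℝ) (s : ℕ) : ℝ :=
  (m.choose s : ℝ) * p ^ s * (1 - p) ^ (m - s)

lemma bernoulli_mgf_le (p : ℝ) (hp0 : 0 ≤ p) (hp1 : p ≤ 1) (t : ℝ) :
    p * Real.exp t + (1 - p) ≤ Real.exp (p * t + t ^ 2 / 8) := by
  let μ : Measure Bool := bernoulliMeasure true false ⟨p, hp0, hp1⟩
  let X : Bool → ℝ := fun b ↦ (if b then 1 else 0) - p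
  have hX : HasSubgaussianMGF X ((‖(1 - p) - -p‖₊ / 2) ^ 2) μ := by
    refine hasSubgaussianMGF_of_mem_Icc_of_integral_eq_zero (by fun_prop)
      (ae_of_all _ fun b ↦ ?_) ?_
    · cases b <;> simp [X]
    · simp [X, μ, integral_bernoulliMeasure]; ring
  have hmgf : mgf X μ t = Real.exp (-(p * t)) * (p * Real.exp t + (1 - p)) := by
    rw [mgf, integral_bernoulliMeasure]
    simp only [X, if_true, Bool.false_eq_true, if_false, smul_eq_mul]
    rw [mul_sub, mul_sub, Real.exp_sub, Real.exp_sub, mul_one, mul_zero, Real.exp_zero,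
      Real.exp_neg]
    field_simp
  have hparam : ((‖(1 - p) - -p‖₊ / 2) ^ 2 : NNReal) = (1 / 4 : ℝ) := by
    norm_num [sub_neg_eq_add]
  have hle := hX.mgf_le t
  rw [hmgf, hparam] at hle
  calc p * Real.exp t + (1 - p)
      = Real.exp (p * t) * (Real.exp (-(p * t)) * (p * Real.exp t + (1 - p))) := by
        rw [← mul_assoc, ← Real.exp_add, add_neg_cancel, Real.exp_zero, one_mul]
    _ ≤ Real.exp (p * t) * Real.exp (1 / 4 * t ^ 2 / 2) := by gcongr
    _ = Real.exp (p * t + t ^ 2 / 8) := by rw [← Real.exp_add]; ring_nf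

lemma binomialPMF_nonneg {m : ℕ} {p : ℝ} (hp0 : 0 ≤ p) (hp1 : p ≤ 1) (s : ℕ) :
    0 ≤ binomialPMF m p s := by
  have : 0 ≤ 1 - p := by linarith
  unfold binomialPMF
  positivity

lemma sum_exp_mul_binomialPMF (m : ℕ) (p t : ℝ) :
    ∑ s ∈ range (m + 1), Real.exp (t * s) * binomialPMF m p s
      = (p * Real.exp t + (1 - p)) ^ m := by
  rw [add_pow]
  refine sum_congr rfl fun s _ ↦ ?_
  rw [binomialPMF, mul_comm t, Real.exp_nat_mul, mul_pow]
  ring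

lemma sum_binomialPMF (m : ℕ) (p : ℝ) : ∑ s ∈ range (m + 1), binomialPMF m p s = 1 := by
  simpa using sum_exp_mul_binomialPMF m p 0

lemma sum_filter_binomialPMF_le {m : ℕ} {p : ℝ} (hp0 : 0 ≤ p) (hp1 : p ≤ 1) (A : ℕ → Prop)
    [DecidablePred A] (t T : ℝ) (hA : ∀ s, A s → t * T ≤ t * s) :
    ∑ s ∈ (range (m + 1)).filter A, binomialPMF m p s
      ≤ Real.exp (m * (p * t + t ^ 2 / 8) - t * T) := by
  calc ∑ s ∈ (range (m + 1)).filter A, binomialPMF m p s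
      ≤ ∑ s ∈ range (m + 1), Real.exp (t * s - t * T) * binomialPMF m p s := by
        rw [sum_filter]
        refine sum_le_sum fun s _ ↦ ?_
        split_ifs with hs
        · exact le_mul_of_one_le_left (binomialPMF_nonneg hp0 hp1 s)
            (Real.one_le_exp (by linarith [hA s hs]))
        · exact mul_nonneg (Real.exp_pos _).le (binomialPMF_nonneg hp0 hp1 s)
    _ = Real.exp (-(t * T)) * (p * Real.exp t + (1 - p)) ^ m := by
        simp_rw [← sum_exp_mul_binomialPMF, mul_sum, ← mul_assoc, ← Real.exp_add,
          sub_eq_neg_add]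
    _ ≤ Real.exp (-(t * T)) * Real.exp (p * t + t ^ 2 / 8) ^ m := by
        have : 0 ≤ p * Real.exp t + (1 - p) := by
          nlinarith [Real.exp_pos t]
        gcongr
        exact bernoulli_mgf_le p hp0 hp1 t
    _ = Real.exp (m * (p * t + t ^ 2 / 8) - t * T) := by
        rw [← Real.exp_nat_mul, ← Real.exp_add]; ring_nf

lemma binomial_upper_tail_le {m : ℕ} {p : ℝ} (hp0 : 0 ≤ p) (hp1 : p ≤ 1) {ε T : ℝ}
    (hε : 0 ≤ ε) (hT : m * (p + ε) ≤ T) :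
    ∑ s ∈ (range (m + 1)).filter (fun s : ℕ ↦ T < s), binomialPMF m p s
      ≤ Real.exp (-(2 * m * ε ^ 2)) := by
  refine (sum_filter_binomialPMF_le hp0 hp1 _ (4 * ε) T
    fun s hs ↦ by gcongr).trans (Real.exp_le_exp.2 ?_)
  nlinarith

lemma binomial_lower_tail_le {m : ℕ} {p : ℝ} (hp0 : 0 ≤ p) (hp1 : p ≤ 1) {ε T : ℝ}
    (hε : 0 ≤ ε) (hT : T ≤ m * (p - ε)) :
    ∑ s ∈ (range (m + 1)).filter (fun s : ℕ ↦ ¬ T < s), binomialPMF m p s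
      ≤ Real.exp (-(2 * m * ε ^ 2)) := by
  refine (sum_filter_binomialPMF_le hp0 hp1 _ (-(4 * ε)) T
    fun s hs ↦ ?_).trans (Real.exp_le_exp.2 ?_)
  · nlinarith [not_lt.1 hs]
  · nlinarith

theorem binomial_threshold_test_general (γ δ : ℝ) (hγ : 0 < γ) (hδ : 0 < δ)
    (x : ℝ) (hx : x ∈ Set.Icc (0 : ℝ) 1)
    (m : ℕ) (hm : m = ⌈(1 / 2) * γ⁻¹ ^ 2 * Real.log (1 / δ)⌉₊) :
    (1 / 2 + γ ≤ x →
      1 - δ ≤ ∑ s ∈ Finset.range (m + 1),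
        if (m : ℝ) * (1 / 4 + γ ^ 2) < (s : ℝ) then binomialPMF m (x ^ 2) s else 0) ∧
    (x ≤ 1 / 2 - γ →
      (∑ s ∈ Finset.range (m + 1),
        if (m : ℝ) * (1 / 4 + γ ^ 2) < (s : ℝ) then binomialPMF m (x ^ 2) s else 0) ≤ δ) := by
  obtain ⟨hx0, hx1⟩ := hx
  have hp0 : 0 ≤ x ^ 2 := sq_nonneg x
  have hp1 : x ^ 2 ≤ 1 := by nlinarith
  have hm0 : (0 : ℝ) ≤ m := m.cast_nonneg
  have hexp : Real.exp (-(2 * m * γ ^ 2)) ≤ δ := by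
    have hlog : Real.log (1 / δ) ≤ 2 * m * γ ^ 2 := by
      have hm_ge := hm ▸ Nat.le_ceil ((1 / 2) * γ⁻¹ ^ 2 * Real.log (1 / δ))
      field_simp at hm_ge
      linarith
    rw [one_div, Real.log_inv] at hlog
    simpa [Real.exp_log hδ] using Real.exp_le_exp.2 (neg_le.1 hlog)
  simp only [← sum_filter]
  constructor
  · intro hx
    have hp : 1 / 4 + γ ^ 2 ≤ x ^ 2 - γ := by nlinarith
    have hlower := binomial_lower_tail_le hp0 hp1 hγ.le (mul_le_mul_of_nonneg_left hp hm0)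
    have hsplit := sum_filter_add_sum_filter_not (range (m + 1))
      (fun s : ℕ ↦ (m : ℝ) * (1 / 4 + γ ^ 2) < s) (binomialPMF m (x ^ 2))
    linarith [sum_binomialPMF m (x ^ 2)]
  · intro hx
    have hp : x ^ 2 + γ ≤ 1 / 4 + γ ^ 2 := by nlinarith
    exact (binomial_upper_tail_le hp0 hp1 hγ.le (mul_le_mul_of_nonneg_left hp hm0)).trans hexp

theorem binomial_threshold_test (γ δ : ℝ) (hγ : 0 < γ) (hγ' : γ ≤ 1 / 2) (hδ : 0 < δ)
    (x : ℝ) (hx : x ∈ Set.Icc (0 : ℝ) 1)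
    (m : ℕ) (hm : m = ⌈(1 / 2) * γ⁻¹ ^ 2 * Real.log (1 / δ)⌉₊) :
    (1 / 2 + γ ≤ x →
      1 - δ ≤ ∑ s ∈ Finset.range (m + 1),
        if (m : ℝ) * (1 / 4 + γ ^ 2) < (s : ℝ) then binomialPMF m (x ^ 2) s else 0) ∧
    (x ≤ 1 / 2 - γ →
      (∑ s ∈ Finset.range (m + 1),
        if (m : ℝ) * (1 / 4 + γ ^ 2) < (s : ℝ) then binomialPMF m (x ^ 2) s else 0) ≤ δ) :=
  binomial_threshold_test_general γ δ hγ hδ x hx m hm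
end
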